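/- arXiv:1101.2300 — 2 statements merged into one kernel-verified Lean document; each statement's English description precedes it below -/
import Mathlib

section
/- Cramér's theorem fails for the Gamma distribution in general: there exist a probability space and independent real random variables X and Y on it, with E[X] = 0, E[X²] = 1 = 2·(1/2), E[Y] = 0, E[Y²] = 3 = 2·(3/2), such that X + Y has the centered Gamma distribution F(2), yet Y does not have the centered Gamma distribution F(ν) for any ν > 0 (in particular Y does not have the distribution F(3/2)). -/
open MeasureTheory ProbabilityTheory

open Real Set
open scoped NNReal ENNReal

/-- The centered Gamma distribution `F(ν)`: the law of `2G - ν` where `G` is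
Gamma-distributed with shape `ν/2` and rate `1`. -/
noncomputable def centeredGammaMeasure (ν : ℝ) : Measure ℝ :=
  (gammaMeasure (ν / 2) 1).map (fun x => 2 * x - ν)

lemma integrableOn_pow_mul_exp (n : ℕ) {r : ℝ} (hr : 0 < r) :
    IntegrableOn (fun x : ℝ => x ^ n * Real.exp (-(r * x))) (Ioi 0) := by
  have h : IntegrableOn (fun x : ℝ => Real.exp (-x) * x ^ ((n + 1 : ℝ) - 1)) (Ioi 0) :=
    Real.GammaIntegral_convergent (by positivity)
  have h2 : IntegrableOn (fun x : ℝ => Real.exp (-(r * x)) * (r * x) ^ ((n + 1 : ℝ) - 1))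
      (Ioi 0) := by
    have := (integrableOn_Ioi_comp_mul_left_iff
      (fun x : ℝ => Real.exp (-x) * x ^ ((n + 1 : ℝ) - 1)) 0 hr).2 (by simpa using h)
    simpa using this
  have h3 := h2.const_mul ((r : ℝ) ^ n)⁻¹
  refine MeasureTheory.IntegrableOn.congr_fun h3 (fun x hx => ?_) measurableSet_Ioi
  have hx0 : (0 : ℝ) < x := hx
  have hrx : (0 : ℝ) ≤ r * x := by positivity
  have : ((n + 1 : ℝ) - 1) = (n : ℝ) := by ring
  rw [this, Real.rpow_natCast]
  field_simp [mul_pow]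
  ring

lemma gammaPDFReal_one (r x : ℝ) :
    gammaPDFReal 1 r x = if 0 ≤ x then r * Real.exp (-(r * x)) else 0 := by
  unfold gammaPDFReal
  have h1 : (1 : ℝ) - 1 = 0 := by ring
  simp [h1, Real.Gamma_one, Real.rpow_one, Real.rpow_zero]

lemma integral_gammaMeasure_one {r : ℝ} (hr : 0 < r) (g : ℝ → ℝ) :
    ∫ x, g x ∂(gammaMeasure 1 r) = ∫ x in Ioi 0, r * Real.exp (-(r * x)) * g x := by
  have h1 : gammaMeasure 1 r
      = volume.withDensity (fun x => ((Real.toNNReal (gammaPDFReal 1 r x) : ℝ≥0) : ℝ≥0∞)) := rfl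
  rw [h1, integral_withDensity_eq_integral_smul ((measurable_gammaPDFReal 1 r).real_toNNReal) g,
    ← integral_indicator measurableSet_Ioi]
  apply integral_congr_ae
  have h0 : ∀ᵐ (x : ℝ), x ≠ 0 := by
    rw [ae_iff]
    convert Real.volume_singleton (a := 0) using 2
    ext x; simp
  filter_upwards [h0] with x hx
  rcases lt_or_gt_of_ne hx with hneg | hpos
  · simp [gammaPDFReal_one, not_le.2 hneg, indicator, hneg.not_gt]
  · have hle : (0:ℝ) ≤ x := hpos.le
    simp only [gammaPDFReal_one, if_pos hle, indicator, mem_Ioi, hpos, if_pos]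
    rw [NNReal.smul_def, Real.coe_toNNReal _ (by positivity), smul_eq_mul]

lemma int_exp_Ioi {r : ℝ} (hr : 0 < r) :
    ∫ x in Ioi (0:ℝ), Real.exp (-(r * x)) = 1 / r := by
  have h := Real.integral_rpow_mul_exp_neg_mul_Ioi (a := 1) one_pos hr
  simp only [sub_self, Real.rpow_zero, one_mul, Real.rpow_one, Real.Gamma_one, mul_one] at h
  simpa using h

lemma int_x_exp_Ioi {r : ℝ} (hr : 0 < r) :
    ∫ x in Ioi (0:ℝ), x * Real.exp (-(r * x)) = 1 / r ^ 2 := by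
  have h := Real.integral_rpow_mul_exp_neg_mul_Ioi (a := 2) two_pos hr
  have h2 : ((2:ℝ) - 1) = 1 := by norm_num
  rw [h2] at h
  simp only [Real.rpow_one] at h
  rw [h, Real.Gamma_two]
  rw [show ((2:ℝ) = ((2:ℕ):ℝ)) by norm_num, Real.rpow_natCast]
  norm_num

lemma int_x2_exp_Ioi {r : ℝ} (hr : 0 < r) :
    ∫ x in Ioi (0:ℝ), x ^ 2 * Real.exp (-(r * x)) = 2 / r ^ 3 := by
  have h := Real.integral_rpow_mul_exp_neg_mul_Ioi (a := 3) three_pos hr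
  have h2 : ((3:ℝ) - 1) = ((2:ℕ):ℝ) := by norm_num
  rw [h2] at h
  have h3 : ∫ x in Ioi (0:ℝ), x ^ ((2:ℕ):ℝ) * Real.exp (-(r * x))
      = ∫ x in Ioi (0:ℝ), x ^ 2 * Real.exp (-(r * x)) := by
    refine setIntegral_congr_fun measurableSet_Ioi (fun x hx => ?_)
    rw [Real.rpow_natCast]
  rw [h3] at h
  have h4 : Real.Gamma 3 = 2 := by
    rw [show ((3:ℝ) = ((2:ℕ):ℝ) + 1) by norm_num, Real.Gamma_nat_eq_factorial]
    norm_num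
  rw [h, h4, show ((3:ℝ) = ((3:ℕ):ℝ)) by norm_num, Real.rpow_natCast]
  field_simp
lemma intOn_exp {r : ℝ} (hr : 0 < r) :
    IntegrableOn (fun x : ℝ => Real.exp (-(r * x))) (Ioi 0) := by
  simpa using integrableOn_pow_mul_exp 0 hr

lemma intOn_x_exp {r : ℝ} (hr : 0 < r) :
    IntegrableOn (fun x : ℝ => x * Real.exp (-(r * x))) (Ioi 0) := by
  simpa using integrableOn_pow_mul_exp 1 hr

lemma moment1_gamma {r : ℝ} (hr : 0 < r) :
    ∫ x, (2 * x - 1) ∂(gammaMeasure 1 r) = 2 / r - 1 := by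
  rw [integral_gammaMeasure_one hr]
  have hfun : (fun x : ℝ => r * Real.exp (-(r * x)) * (2 * x - 1))
      = fun x : ℝ => (2 * r) * (x * Real.exp (-(r * x))) - r * Real.exp (-(r * x)) := by
    funext x; ring
  have hI1 : Integrable (fun x : ℝ => 2 * r * (x * Real.exp (-(r * x))))
      (volume.restrict (Ioi 0)) := (intOn_x_exp hr).const_mul _
  have hI0 : Integrable (fun x : ℝ => r * Real.exp (-(r * x)))
      (volume.restrict (Ioi 0)) := (intOn_exp hr).const_mul _
  rw [hfun, integral_sub hI1 hI0, integral_const_mul, integral_const_mul,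
    int_x_exp_Ioi hr, int_exp_Ioi hr]
  field_simp

lemma moment2_gamma {r : ℝ} (hr : 0 < r) :
    ∫ x, (2 * x - 1) ^ 2 ∂(gammaMeasure 1 r) = 8 / r ^ 2 - 4 / r + 1 := by
  rw [integral_gammaMeasure_one hr]
  have hfun : (fun x : ℝ => r * Real.exp (-(r * x)) * (2 * x - 1) ^ 2)
      = fun x : ℝ => ((4 * r) * (x ^ 2 * Real.exp (-(r * x)))
          - (4 * r) * (x * Real.exp (-(r * x)))) + r * Real.exp (-(r * x)) := by
    funext x; ring
  have hI2 : Integrable (fun x : ℝ => 4 * r * (x ^ 2 * Real.exp (-(r * x))))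
      (volume.restrict (Ioi 0)) := (integrableOn_pow_mul_exp 2 hr).const_mul _
  have hI1 : Integrable (fun x : ℝ => 4 * r * (x * Real.exp (-(r * x))))
      (volume.restrict (Ioi 0)) := (intOn_x_exp hr).const_mul _
  have hI0 : Integrable (fun x : ℝ => r * Real.exp (-(r * x)))
      (volume.restrict (Ioi 0)) := (intOn_exp hr).const_mul _
  have hI21 : Integrable (fun x : ℝ => 4 * r * (x ^ 2 * Real.exp (-(r * x)))
      - 4 * r * (x * Real.exp (-(r * x)))) (volume.restrict (Ioi 0)) := by
    exact hI2.sub hI1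
  rw [hfun, integral_add hI21 hI0, integral_sub hI2 hI1, integral_const_mul, integral_const_mul,
    integral_const_mul, int_x2_exp_Ioi hr, int_x_exp_Ioi hr, int_exp_Ioi hr]
  field_simp
  ring

lemma gammaMeasure_one_Iic {r : ℝ} (hr : 0 < r) (t : ℝ) :
    gammaMeasure 1 r (Iic t)
      = ENNReal.ofReal (if 0 ≤ t then 1 - Real.exp (-(r * t)) else 0) := by
  have hp : IsProbabilityMeasure (expMeasure r) := isProbabilityMeasure_expMeasure hr
  have h := cdf_expMeasure_eq hr t
  rw [cdf_eq_real, measureReal_def] at h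
  rw [← h, ENNReal.ofReal_toReal (measure_ne_top _ _)]
  rfl

noncomputable def kappa : Measure ℝ :=
  (2 : ℝ≥0∞)⁻¹ • Measure.dirac 0 + (2 : ℝ≥0∞)⁻¹ • gammaMeasure 1 1

instance : IsProbabilityMeasure kappa := by
  constructor
  have h1 : IsProbabilityMeasure (gammaMeasure 1 1) := isProbabilityMeasure_gammaMeasure one_pos one_pos
  simp [kappa, measure_univ, ENNReal.inv_two_add_inv_two]

lemma kappa_Iic (u : ℝ) :
    kappa (Iic u) = ENNReal.ofReal (if 0 ≤ u then 1 - Real.exp (-u) / 2 else 0) := by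
  have hd : Measure.dirac (0:ℝ) (Iic u) = if 0 ≤ u then 1 else 0 := by
    rw [Measure.dirac_apply' _ measurableSet_Iic]
    by_cases h : 0 ≤ u
    · rw [indicator_of_mem (by simpa using h)]; simp [h]
    · rw [indicator_of_notMem (by simpa using h)]; simp [h]
  have h2 : (2 : ℝ≥0∞)⁻¹ = ENNReal.ofReal (1 / 2) := by
    rw [ENNReal.ofReal_div_of_pos two_pos, ENNReal.ofReal_one, ENNReal.ofReal_ofNat]
    simp
  simp only [kappa, Measure.add_apply, Measure.smul_apply, smul_eq_mul, hd,
    gammaMeasure_one_Iic one_pos, one_mul]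
  by_cases h : 0 ≤ u
  · have he : Real.exp (-u) ≤ 1 := Real.exp_le_one_iff.2 (by linarith)
    rw [if_pos h, if_pos h, if_pos h, mul_one, h2,
      ← ENNReal.ofReal_mul (by norm_num), ← ENNReal.ofReal_add (by norm_num) (by nlinarith)]
    congr 1
    ring
  · rw [if_neg h, if_neg h, if_neg h]
    simp

lemma int_exp_c {c : ℝ} (hc : c ≠ 0) (t : ℝ) :
    ∫ x in (0:ℝ)..t, Real.exp (c * x) = (Real.exp (c * t) - 1) / c := by
  rw [intervalIntegral.integral_comp_mul_left Real.exp hc]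
  simp [integral_exp, smul_eq_mul]
  field_simp
lemma conv_eq :
    Measure.map (fun p : ℝ × ℝ => p.1 + p.2) ((gammaMeasure 1 2).prod kappa)
      = gammaMeasure 1 1 := by
  have hg2 : IsProbabilityMeasure (gammaMeasure 1 2) := isProbabilityMeasure_gammaMeasure one_pos two_pos
  have hg1 : IsProbabilityMeasure (gammaMeasure 1 1) := isProbabilityMeasure_gammaMeasure one_pos one_pos
  have hadd : Measurable (fun p : ℝ × ℝ => p.1 + p.2) := measurable_fst.add measurable_snd
  have hmap : IsProbabilityMeasure
      (Measure.map (fun p : ℝ × ℝ => p.1 + p.2) ((gammaMeasure 1 2).prod kappa)) :=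
    Measure.isProbabilityMeasure_map hadd.aemeasurable
  refine Measure.ext_of_Iic _ _ (fun t => ?_)
  rw [Measure.map_apply hadd measurableSet_Iic, Measure.prod_apply (hadd measurableSet_Iic),
    gammaMeasure_one_Iic one_pos]
  have hpre : ∀ x : ℝ, Prod.mk x ⁻¹' ((fun p : ℝ × ℝ => p.1 + p.2) ⁻¹' Iic t) = Iic (t - x) := by
    intro x
    ext y
    simp only [mem_preimage, mem_Iic]
    constructor <;> intro h <;> linarith
  simp_rw [hpre, kappa_Iic]
  rw [gammaMeasure]
  have hpdf : Measurable (gammaPDF 1 2) := (measurable_gammaPDFReal 1 2).ennreal_ofReal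
  have hmeas : Measurable (fun x : ℝ =>
      ENNReal.ofReal (if 0 ≤ t - x then 1 - Real.exp (-(t - x)) / 2 else 0)) := by
    refine Measurable.ennreal_ofReal (Measurable.ite ?_ (by fun_prop) measurable_const)
    exact measurableSet_le measurable_const (measurable_const.sub measurable_id)
  rw [lintegral_withDensity_eq_lintegral_mul volume hpdf hmeas]
  have key : ∀ x : ℝ, (gammaPDF 1 2 * fun x =>
        ENNReal.ofReal (if 0 ≤ t - x then 1 - Real.exp (-(t - x)) / 2 else 0)) x
      = ENNReal.ofReal ((Icc (0:ℝ) t).indicator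
          (fun x => 2 * Real.exp (-(2 * x)) * (1 - Real.exp (-(t - x)) / 2)) x) := by
    intro x
    simp only [Pi.mul_apply]
    by_cases hx : 0 ≤ x
    · rw [gammaPDF_of_nonneg hx]
      have hpdfx : (2:ℝ) ^ (1:ℝ) / Real.Gamma 1 * x ^ ((1:ℝ) - 1) * Real.exp (-(2 * x))
          = 2 * Real.exp (-(2 * x)) := by
        have h0 : ((1:ℝ) - 1) = 0 := by ring
        rw [Real.Gamma_one, Real.rpow_one, h0, Real.rpow_zero]
        ring
      rw [hpdfx]
      by_cases hxt : x ≤ t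
      · have h1 : 0 ≤ t - x := by linarith
        rw [if_pos h1, ← ENNReal.ofReal_mul (by positivity),
          indicator_of_mem (show x ∈ Icc (0:ℝ) t from ⟨hx, hxt⟩)]
      · have h1 : ¬ (0:ℝ) ≤ t - x := fun h => hxt (by linarith)
        rw [if_neg h1, indicator_of_notMem (fun h => hxt h.2)]
        simp
    · rw [gammaPDF_of_neg (not_le.1 hx), indicator_of_notMem (fun h => hx h.1)]
      simp
  rw [lintegral_congr key]
  have hcont : Continuous (fun x : ℝ => 2 * Real.exp (-(2 * x)) * (1 - Real.exp (-(t - x)) / 2)) :=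
    by fun_prop
  have hind : Integrable ((Icc (0:ℝ) t).indicator
      (fun x => 2 * Real.exp (-(2 * x)) * (1 - Real.exp (-(t - x)) / 2))) := by
    rw [integrable_indicator_iff measurableSet_Icc]
    exact hcont.integrableOn_Icc
  have hnn : 0 ≤ᵐ[volume] ((Icc (0:ℝ) t).indicator
      (fun x => 2 * Real.exp (-(2 * x)) * (1 - Real.exp (-(t - x)) / 2))) := by
    refine Filter.Eventually.of_forall (fun x => indicator_nonneg (fun y hy => ?_) x)
    have he : Real.exp (-(t - y)) ≤ 1 := Real.exp_le_one_iff.2 (by linarith [hy.2])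
    nlinarith [Real.exp_pos (-(2 * y))]
  rw [← ofReal_integral_eq_lintegral_ofReal hind hnn, integral_indicator measurableSet_Icc]
  by_cases ht : 0 ≤ t
  · rw [if_pos ht, integral_Icc_eq_integral_Ioc, ← intervalIntegral.integral_of_le ht]
    have hG : ∀ x : ℝ, 2 * Real.exp (-(2 * x)) * (1 - Real.exp (-(t - x)) / 2)
        = 2 * Real.exp ((-2) * x) - Real.exp (-t) * Real.exp ((-1) * x) := by
      intro x
      have h1 : 2 * Real.exp (-(2 * x)) * (1 - Real.exp (-(t - x)) / 2)
          = 2 * Real.exp (-(2 * x)) - Real.exp (-(2 * x)) * Real.exp (-(t - x)) := by ring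
      rw [h1, ← Real.exp_add, show (-(2 * x) + -(t - x)) = (-1) * x + -t by ring,
        Real.exp_add, show -(2 * x) = (-2) * x by ring]
      ring
    rw [intervalIntegral.integral_congr (fun x _ => hG x)]
    have hi1 : IntervalIntegrable (fun x : ℝ => 2 * Real.exp ((-2) * x)) volume 0 t :=
      (Continuous.intervalIntegrable (by fun_prop) _ _)
    have hi2 : IntervalIntegrable (fun x : ℝ => Real.exp (-t) * Real.exp ((-1) * x)) volume 0 t :=
      (Continuous.intervalIntegrable (by fun_prop) _ _)
    rw [intervalIntegral.integral_sub hi1 hi2, intervalIntegral.integral_const_mul,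
      intervalIntegral.integral_const_mul, int_exp_c (by norm_num : (-2:ℝ) ≠ 0),
      int_exp_c (by norm_num : (-1:ℝ) ≠ 0)]
    congr 1
    have he2 : Real.exp ((-2) * t) = Real.exp (-t) * Real.exp (-t) := by
      rw [← Real.exp_add]; congr 1; ring
    have he1 : Real.exp ((-1) * t) = Real.exp (-t) := by congr 1; ring
    rw [he2, he1]
    have h1t : Real.exp (-(1 * t)) = Real.exp (-t) := by norm_num
    rw [h1t]
    ring
  · rw [if_neg ht, Icc_eq_empty (by linarith), Measure.restrict_empty, integral_zero_measure]

-- ## Integrability w.r.t. gammaMeasure 1 r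

lemma integrable_gamma_one {r : ℝ} (hr : 0 < r) {g : ℝ → ℝ} (hg : Measurable g)
    (hint : IntegrableOn (fun x => g x * (r * Real.exp (-(r * x)))) (Ioi 0)) :
    Integrable g (gammaMeasure 1 r) := by
  rw [gammaMeasure, show gammaPDF 1 r = (fun x => ENNReal.ofReal (gammaPDFReal 1 r x)) from rfl,
    integrable_withDensity_iff ((measurable_gammaPDFReal 1 r).ennreal_ofReal)
    (Filter.Eventually.of_forall (fun x => ENNReal.ofReal_lt_top))]
  have hae : (fun x => g x * (ENNReal.ofReal (gammaPDFReal 1 r x)).toReal)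
      =ᵐ[volume] (Ioi (0:ℝ)).indicator (fun x => g x * (r * Real.exp (-(r * x)))) := by
    have h0 : ∀ᵐ (x : ℝ), x ≠ 0 := by
      rw [ae_iff]
      convert Real.volume_singleton (a := 0) using 2
      ext x; simp
    filter_upwards [h0] with x hx
    rcases lt_or_gt_of_ne hx with hneg | hpos
    · simp [gammaPDFReal_one, not_le.2 hneg, indicator, hneg.not_gt]
    · rw [gammaPDFReal_one, if_pos hpos.le,
        Set.indicator_of_mem (show x ∈ Ioi (0:ℝ) from hpos),
        ENNReal.toReal_ofReal (by positivity)]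
  refine Integrable.congr ?_ hae.symm
  rwa [integrable_indicator_iff measurableSet_Ioi]

lemma integrable_g1_gamma {r : ℝ} (hr : 0 < r) :
    Integrable (fun x : ℝ => 2 * x - 1) (gammaMeasure 1 r) := by
  refine integrable_gamma_one hr (by fun_prop) ?_
  have hfun : (fun x : ℝ => (2 * x - 1) * (r * Real.exp (-(r * x))))
      = fun x : ℝ => (2 * r) * (x * Real.exp (-(r * x))) - r * Real.exp (-(r * x)) := by
    funext x; ring
  rw [hfun]
  have hx1 : IntegrableOn (fun x : ℝ => x * Real.exp (-(r * x))) (Ioi 0) volume := by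
    simpa using integrableOn_pow_mul_exp 1 hr
  have hx0 : IntegrableOn (fun x : ℝ => Real.exp (-(r * x))) (Ioi 0) volume := by
    simpa using integrableOn_pow_mul_exp 0 hr
  exact (hx1.const_mul _).sub (hx0.const_mul _)

lemma integrable_g2_gamma {r : ℝ} (hr : 0 < r) :
    Integrable (fun x : ℝ => (2 * x - 1) ^ 2) (gammaMeasure 1 r) := by
  refine integrable_gamma_one hr (by fun_prop) ?_
  have hfun : (fun x : ℝ => (2 * x - 1) ^ 2 * (r * Real.exp (-(r * x))))
      = fun x : ℝ => ((4 * r) * (x ^ 2 * Real.exp (-(r * x)))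
          - (4 * r) * (x * Real.exp (-(r * x)))) + r * Real.exp (-(r * x)) := by
    funext x; ring
  rw [hfun]
  have hx2 : IntegrableOn (fun x : ℝ => x ^ 2 * Real.exp (-(r * x))) (Ioi 0) volume :=
    integrableOn_pow_mul_exp 2 hr
  have hx1 : IntegrableOn (fun x : ℝ => x * Real.exp (-(r * x))) (Ioi 0) volume := by
    simpa using integrableOn_pow_mul_exp 1 hr
  have hx0 : IntegrableOn (fun x : ℝ => Real.exp (-(r * x))) (Ioi 0) volume := by
    simpa using integrableOn_pow_mul_exp 0 hr
  exact ((hx2.const_mul _).sub (hx1.const_mul _)).add (hx0.const_mul _)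

-- ## Integrals over kappa

lemma integrable_dirac' {g : ℝ → ℝ} (hg : Measurable g) :
    Integrable g (Measure.dirac (0:ℝ)) := by
  refine ⟨hg.aestronglyMeasurable, ?_⟩
  show (∫⁻ a, (‖g a‖₊ : ℝ≥0∞) ∂(Measure.dirac (0:ℝ))) < ⊤
  rw [lintegral_dirac' _ (by fun_prop)]
  exact ENNReal.coe_lt_top

lemma integral_kappa {g : ℝ → ℝ} (hg : Measurable g)
    (hgi : Integrable g (gammaMeasure 1 1)) :
    ∫ x, g x ∂kappa = g 0 / 2 + (∫ x, g x ∂(gammaMeasure 1 1)) / 2 := by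
  have hA : Integrable g ((2 : ℝ≥0∞)⁻¹ • Measure.dirac (0:ℝ)) :=
    (integrable_dirac' hg).smul_measure (by norm_num)
  have hB : Integrable g ((2 : ℝ≥0∞)⁻¹ • gammaMeasure 1 1) :=
    hgi.smul_measure (by norm_num)
  rw [kappa, integral_add_measure hA hB, integral_smul_measure, integral_smul_measure,
    integral_dirac]
  have h2 : ((2 : ℝ≥0∞)⁻¹).toReal = (1:ℝ)/2 := by
    rw [ENNReal.toReal_inv]; norm_num
  rw [h2]
  simp [smul_eq_mul]
  ring

lemma kappa_m1 : ∫ x, (2 * x - 1) ∂kappa = 0 := by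
  rw [integral_kappa (by fun_prop) (integrable_g1_gamma one_pos), moment1_gamma one_pos]
  norm_num

lemma kappa_m2 : ∫ x, (2 * x - 1) ^ 2 ∂kappa = 3 := by
  rw [integral_kappa (by fun_prop) (integrable_g2_gamma one_pos), moment2_gamma one_pos]
  norm_num

-- ## Atoms

lemma gammaMeasure_singleton (a r c : ℝ) : gammaMeasure a r {c} = 0 := by
  rw [gammaMeasure, withDensity_apply _ (measurableSet_singleton _),
    setLIntegral_measure_zero _ _ Real.volume_singleton]

lemma centeredGamma_singleton (ν c : ℝ) : centeredGammaMeasure ν {c} = 0 := by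
  rw [centeredGammaMeasure, Measure.map_apply (by fun_prop) (measurableSet_singleton c)]
  have hpre : (fun x : ℝ => 2 * x - ν) ⁻¹' {c} = {(c + ν) / 2} := by
    ext x
    simp only [mem_preimage, mem_singleton_iff]
    constructor <;> intro h <;> linarith
  rw [hpre, gammaMeasure_singleton]

lemma kappa_atom : kappa {0} = (2 : ℝ≥0∞)⁻¹ := by
  have hd : Measure.dirac (0:ℝ) {0} = 1 := by
    rw [Measure.dirac_apply' _ (measurableSet_singleton _), indicator_of_mem (mem_singleton _)]
    rfl
  simp [kappa, hd, gammaMeasure_singleton]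

lemma indep_aux {μ ν : Measure ℝ} [IsProbabilityMeasure μ] [IsProbabilityMeasure ν]
    {f g : ℝ → ℝ} (hf : Measurable f) (hg : Measurable g) :
    IndepFun (fun p : ℝ × ℝ => f p.1) (fun p : ℝ × ℝ => g p.2) (μ.prod ν) := by
  rw [indepFun_iff_measure_inter_preimage_eq_mul]
  intro s t hs ht
  have h1 : (fun p : ℝ × ℝ => f p.1) ⁻¹' s = (f ⁻¹' s) ×ˢ univ := by ext p; simp
  have h2 : (fun p : ℝ × ℝ => g p.2) ⁻¹' t = univ ×ˢ (g ⁻¹' t) := by ext p; simp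
  rw [h1, h2, prod_inter_prod, inter_univ, univ_inter, Measure.prod_prod,
    Measure.prod_prod, Measure.prod_prod, measure_univ, measure_univ]
  ring

/-- **Cramér's theorem fails for the Gamma distribution in general**: there exist
independent random variables `X`, `Y` with `E[X] = 0`, `E[X²] = 1 = 2·(1/2)`,
`E[Y] = 0`, `E[Y²] = 3 = 2·(3/2)`, such that `X + Y ~ F(2)` but `Y` does not have a
centered Gamma law `F(ν)` for any `ν > 0` (in particular `Y` is not `F(3/2)`-distributed). -/
theorem cramer_fails_for_gamma :
    ∃ (Ω : Type) (_ : MeasurableSpace Ω) (P : Measure Ω) (_ : IsProbabilityMeasure P)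
      (X Y : Ω → ℝ),
      IndepFun X Y P ∧
      (∫ ω, X ω ∂P = 0) ∧ (∫ ω, (X ω) ^ 2 ∂P = 1) ∧ ((1 : ℝ) = 2 * (1 / 2)) ∧
      (∫ ω, Y ω ∂P = 0) ∧ (∫ ω, (Y ω) ^ 2 ∂P = 3) ∧ ((3 : ℝ) = 2 * (3 / 2)) ∧
      P.map (fun ω => X ω + Y ω) = centeredGammaMeasure 2 ∧
      (∀ ν : ℝ, 0 < ν → P.map Y ≠ centeredGammaMeasure ν) ∧
      P.map Y ≠ centeredGammaMeasure (3 / 2) := by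
  have hg2 : IsProbabilityMeasure (gammaMeasure 1 2) := isProbabilityMeasure_gammaMeasure one_pos two_pos
  have hfst : Measure.map Prod.fst ((gammaMeasure 1 2).prod kappa) = gammaMeasure 1 2 := by
    rw [Measure.map_fst_prod, measure_univ, one_smul]
  have hsnd : Measure.map Prod.snd ((gammaMeasure 1 2).prod kappa) = kappa := by
    rw [Measure.map_snd_prod, measure_univ, one_smul]
  have hmapY : Measure.map (fun ω : ℝ × ℝ => 2 * ω.2 - 1) ((gammaMeasure 1 2).prod kappa)
      = Measure.map (fun x : ℝ => 2 * x - 1) kappa := by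
    rw [show (fun ω : ℝ × ℝ => 2 * ω.2 - 1) = (fun x : ℝ => 2 * x - 1) ∘ Prod.snd from rfl,
      ← Measure.map_map (by fun_prop) measurable_snd, hsnd]
  have hatom : Measure.map (fun x : ℝ => 2 * x - 1) kappa {(-1 : ℝ)} = (2 : ℝ≥0∞)⁻¹ := by
    rw [Measure.map_apply (by fun_prop) (measurableSet_singleton _)]
    have hpre : (fun x : ℝ => 2 * x - 1) ⁻¹' {(-1:ℝ)} = {0} := by
      ext x
      simp only [mem_preimage, mem_singleton_iff]
      constructor <;> intro h <;> linarith
    rw [hpre, kappa_atom]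
  have hne : ∀ ν : ℝ, Measure.map (fun ω : ℝ × ℝ => 2 * ω.2 - 1)
      ((gammaMeasure 1 2).prod kappa) ≠ centeredGammaMeasure ν := by
    intro ν h
    have h2 := congrArg (fun m : Measure ℝ => m {(-1 : ℝ)}) h
    simp only [hmapY, hatom, centeredGamma_singleton] at h2
    exact (by norm_num : ((2:ℝ≥0∞))⁻¹ ≠ 0) h2
  refine ⟨ℝ × ℝ, inferInstance, (gammaMeasure 1 2).prod kappa, inferInstance,
    fun p => 2 * p.1 - 1, fun p => 2 * p.2 - 1,
    ?_, ?_, ?_, by norm_num, ?_, ?_, by norm_num, ?_, fun ν _ => hne ν, hne _⟩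
  · exact indep_aux (f := fun x : ℝ => 2 * x - 1) (g := fun x : ℝ => 2 * x - 1)
      (by fun_prop) (by fun_prop)
  · have e1 : ∫ ω : ℝ × ℝ, (2 * ω.1 - 1) ∂((gammaMeasure 1 2).prod kappa)
        = ∫ x, (2 * x - 1) ∂(gammaMeasure 1 2) := by
      conv_rhs => rw [← hfst]
      rw [integral_map measurable_fst.aemeasurable
        ((by fun_prop : Measurable (fun x : ℝ => 2 * x - 1)).aestronglyMeasurable)]
    rw [e1, moment1_gamma two_pos]
    norm_num
  · have e1 : ∫ ω : ℝ × ℝ, (2 * ω.1 - 1) ^ 2 ∂((gammaMeasure 1 2).prod kappa)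
        = ∫ x, (2 * x - 1) ^ 2 ∂(gammaMeasure 1 2) := by
      conv_rhs => rw [← hfst]
      rw [integral_map measurable_fst.aemeasurable
        ((by fun_prop : Measurable (fun x : ℝ => (2 * x - 1) ^ 2)).aestronglyMeasurable)]
    rw [e1, moment2_gamma two_pos]
    norm_num
  · have e1 : ∫ ω : ℝ × ℝ, (2 * ω.2 - 1) ∂((gammaMeasure 1 2).prod kappa)
        = ∫ x, (2 * x - 1) ∂kappa := by
      conv_rhs => rw [← hsnd]
      rw [integral_map measurable_snd.aemeasurable
        ((by fun_prop : Measurable (fun x : ℝ => 2 * x - 1)).aestronglyMeasurable)]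
    rw [e1, kappa_m1]
  · have e1 : ∫ ω : ℝ × ℝ, (2 * ω.2 - 1) ^ 2 ∂((gammaMeasure 1 2).prod kappa)
        = ∫ x, (2 * x - 1) ^ 2 ∂kappa := by
      conv_rhs => rw [← hsnd]
      rw [integral_map measurable_snd.aemeasurable
        ((by fun_prop : Measurable (fun x : ℝ => (2 * x - 1) ^ 2)).aestronglyMeasurable)]
    rw [e1, kappa_m2]
  · have hXY : (fun ω : ℝ × ℝ => (2 * ω.1 - 1) + (2 * ω.2 - 1))
        = (fun s : ℝ => 2 * s - 2) ∘ (fun p : ℝ × ℝ => p.1 + p.2) := by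
      funext p
      simp only [Function.comp_apply]
      ring
    rw [hXY, ← Measure.map_map (by fun_prop) (by fun_prop), conv_eq]
    rw [centeredGammaMeasure]
    norm_num
end

section
/- Let (T, μ) be a σ-finite measure space, let q₁, q₂ ≥ 1 be integers, and let f ∈ L²(T^{q₁}) and h ∈ L²(T^{q₂}) be symmetric functions (invariant under every permutation of their arguments). For 1 ≤ r ≤ min(q₁, q₂), define the r-th contraction (f ⊗_r h)(s₁,…,s_{q₁−r}, t₁,…,t_{q₂−r}) = ∫_{T^r} f(s₁,…,s_{q₁−r}, u₁,…,u_r) h(t₁,…,t_{q₂−r}, u₁,…,u_r) dμ(u₁)⋯dμ(u_r). If f ⊗₁ h = 0 almost everywhere on T^{q₁+q₂−2}, then for every 1 ≤ r ≤ min(q₁, q₂) one has f ⊗_r h = 0 almost everywhere on T^{q₁+q₂−2r}. -/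
open MeasureTheory

noncomputable section ContractionAux

set_option linter.unusedSectionVars false
set_option synthInstance.maxHeartbeats 1000000
set_option maxHeartbeats 1600000
namespace ContractionAux

variable {X Y : Type*} [MeasurableSpace X] [MeasurableSpace Y]
  {ν₁ : Measure X} {ν₂ : Measure Y} [SigmaFinite ν₁] [SigmaFinite ν₂]

theorem integrable_mul_of_memL2 {f g : X → ℝ} (hf : MemLp f 2 ν₁) (hg : MemLp g 2 ν₁) :
    Integrable (fun x => f x * g x) ν₁ := by
  have h : MemLp (f • g) 1 ν₁ := hg.smul hf
  rw [← memLp_one_iff_integrable]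
  exact h

theorem ae_memL2_slice {k : X × Y → ℝ} (hk : MemLp k 2 (ν₁.prod ν₂)) :
    ∀ᵐ x ∂ν₁, MemLp (fun y => k (x, y)) 2 ν₂ := by
  filter_upwards [hk.integrable_sq.prod_right_ae, hk.aestronglyMeasurable.prodMk_left]
    with x h1 h2
  exact (memLp_two_iff_integrable_sq h2).2 h1

theorem memL2_sliceNorm {k : X × Y → ℝ} (hk : MemLp k 2 (ν₁.prod ν₂)) :
    MemLp (fun x => Real.sqrt (∫ y, k (x, y) ^ 2 ∂ν₂)) 2 ν₁ := by
  have hsq := hk.integrable_sq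
  have hm : AEStronglyMeasurable (fun x => ∫ y, k (x, y) ^ 2 ∂ν₂) ν₁ :=
    (hk.aestronglyMeasurable.pow 2).integral_prod_right'
  have hm' : AEStronglyMeasurable (fun x => Real.sqrt (∫ y, k (x, y) ^ 2 ∂ν₂)) ν₁ :=
    Real.continuous_sqrt.comp_aestronglyMeasurable hm
  refine (memLp_two_iff_integrable_sq hm').2 ?_
  refine hsq.integral_prod_left.congr ?_
  refine Filter.Eventually.of_forall fun x => ?_
  exact (Real.sq_sqrt (integral_nonneg fun y => sq_nonneg _)).symm

theorem norm_toLp_eq_sqrt {f : X → ℝ} (hf : MemLp f 2 ν₁) :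
    ‖hf.toLp f‖ = Real.sqrt (∫ x, f x ^ 2 ∂ν₁) := by
  have h1 : (inner ℝ (hf.toLp f) (hf.toLp f) : ℝ) = ∫ x, f x ^ 2 ∂ν₁ := by
    rw [L2.inner_def]
    refine integral_congr_ae ?_
    filter_upwards [hf.coeFn_toLp] with x hx
    simp [hx, RCLike.inner_apply, sq]
  rw [real_inner_self_eq_norm_sq] at h1
  rw [← h1, Real.sqrt_sq (norm_nonneg _)]

theorem abs_integral_mul_le {f g : Y → ℝ} (hf : MemLp f 2 ν₂) (hg : MemLp g 2 ν₂) :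
    |∫ y, f y * g y ∂ν₂| ≤ Real.sqrt (∫ y, f y ^ 2 ∂ν₂) * Real.sqrt (∫ y, g y ^ 2 ∂ν₂) := by
  have h1 : (inner ℝ (hf.toLp f) (hg.toLp g) : ℝ) = ∫ y, f y * g y ∂ν₂ := by
    rw [L2.inner_def]
    refine integral_congr_ae ?_
    filter_upwards [hf.coeFn_toLp, hg.coeFn_toLp] with y hy hy'
    simp [hy, hy', RCLike.inner_apply, mul_comm]
  rw [← h1, ← norm_toLp_eq_sqrt hf, ← norm_toLp_eq_sqrt hg]
  exact abs_real_inner_le_norm _ _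


theorem memL2_tensor {g : X → ℝ} {v : Y → ℝ} (hg : MemLp g 2 ν₁) (hv : MemLp v 2 ν₂) :
    MemLp (fun p : X × Y => g p.1 * v p.2) 2 (ν₁.prod ν₂) := by
  have hm : AEStronglyMeasurable (fun p : X × Y => g p.1 * v p.2) (ν₁.prod ν₂) :=
    hg.aestronglyMeasurable.comp_fst.mul hv.aestronglyMeasurable.comp_snd
  refine (memLp_two_iff_integrable_sq hm).2 ?_
  have := hg.integrable_sq.mul_prod hv.integrable_sq
  refine this.congr (Filter.Eventually.of_forall fun p => ?_)
  ring

theorem memL2_kernel_apply {k : X × Y → ℝ} (hk : MemLp k 2 (ν₁.prod ν₂)) {v : Y → ℝ}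
    (hv : MemLp v 2 ν₂) : MemLp (fun x => ∫ y, k (x, y) * v y ∂ν₂) 2 ν₁ := by
  have hm : AEStronglyMeasurable (fun x => ∫ y, k (x, y) * v y ∂ν₂) ν₁ :=
    (hk.aestronglyMeasurable.mul hv.aestronglyMeasurable.comp_snd).integral_prod_right'
  have hmb : MemLp (fun x =>
      Real.sqrt (∫ y, k (x, y) ^ 2 ∂ν₂) * Real.sqrt (∫ y, v y ^ 2 ∂ν₂)) 2 ν₁ :=
    by simpa [mul_comm] using (memL2_sliceNorm hk).const_mul (Real.sqrt (∫ y, v y ^ 2 ∂ν₂))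
  refine MemLp.of_le hmb hm ?_
  filter_upwards [ae_memL2_slice hk] with x hx
  rw [Real.norm_eq_abs, Real.norm_eq_abs]
  refine le_trans (abs_integral_mul_le hx hv) ?_
  exact le_abs_self _

/-- L² bound for the kernel operator. -/
theorem norm_kernel_apply_le {k : X × Y → ℝ} (hk : MemLp k 2 (ν₁.prod ν₂)) {v : Y → ℝ}
    (hv : MemLp v 2 ν₂) :
    ‖(memL2_kernel_apply hk hv).toLp _‖
      ≤ Real.sqrt (∫ p, k p ^ 2 ∂(ν₁.prod ν₂)) * ‖hv.toLp v‖ := by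
  rw [norm_toLp_eq_sqrt, norm_toLp_eq_sqrt]
  have h1 : ∀ x, MemLp (fun y => k (x, y)) 2 ν₂ →
      (∫ y, k (x, y) * v y ∂ν₂) ^ 2
        ≤ (Real.sqrt (∫ y, k (x, y) ^ 2 ∂ν₂) * Real.sqrt (∫ y, v y ^ 2 ∂ν₂)) ^ 2 := by
    intro x hx
    rw [sq_le_sq]
    rw [abs_of_nonneg (a := Real.sqrt _ * Real.sqrt _) (by positivity)]
    exact abs_integral_mul_le hx hv
  have h2 : (∫ x, (∫ y, k (x, y) * v y ∂ν₂) ^ 2 ∂ν₁)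
      ≤ ∫ x, (∫ y, k (x, y) ^ 2 ∂ν₂) * (∫ y, v y ^ 2 ∂ν₂) ∂ν₁ := by
    refine integral_mono_ae ((memL2_kernel_apply hk hv).integrable_sq) ?_ ?_
    · exact (hk.integrable_sq.integral_prod_left).mul_const _
    · filter_upwards [ae_memL2_slice hk] with x hx
      refine le_trans (h1 x hx) (le_of_eq ?_)
      rw [mul_pow, Real.sq_sqrt (integral_nonneg fun y => sq_nonneg _),
        Real.sq_sqrt (integral_nonneg fun y => sq_nonneg _)]
  have h3 : (∫ x, (∫ y, k (x, y) ^ 2 ∂ν₂) * (∫ y, v y ^ 2 ∂ν₂) ∂ν₁)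
      = (∫ p, k p ^ 2 ∂(ν₁.prod ν₂)) * (∫ y, v y ^ 2 ∂ν₂) := by
    rw [integral_mul_const, ← integral_prod _ hk.integrable_sq]
  rw [← Real.sqrt_mul (integral_nonneg fun p => sq_nonneg _)]
  refine Real.sqrt_le_sqrt ?_
  rw [← h3]
  exact h2


/-- The integral operator with kernel `k`, as a continuous linear map `L²(ν₂) → L²(ν₁)`. -/
def kernelCLM {k : X × Y → ℝ} (hk : MemLp k 2 (ν₁.prod ν₂)) :
    Lp ℝ 2 ν₂ →L[ℝ] Lp ℝ 2 ν₁ := by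
  refine LinearMap.mkContinuous
    { toFun := fun v => (memL2_kernel_apply hk (Lp.memLp v)).toLp _
      map_add' := ?_
      map_smul' := ?_ } (Real.sqrt (∫ p, k p ^ 2 ∂(ν₁.prod ν₂))) ?_
  · intro u v
    rw [← MemLp.toLp_add, MemLp.toLp_eq_toLp_iff]
    have hu : ∀ᵐ y ∂ν₂, (⇑(u + v) : Y → ℝ) y = u y + v y := Lp.coeFn_add u v
    filter_upwards [ae_memL2_slice hk] with x hx
    have h1 : ∫ y, k (x, y) * (u + v) y ∂ν₂ = ∫ y, (k (x, y) * u y + k (x, y) * v y) ∂ν₂ := by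
      refine integral_congr_ae ?_
      filter_upwards [hu] with y hy
      rw [hy]; ring
    rw [h1, integral_add (integrable_mul_of_memL2 hx (Lp.memLp u))
      (integrable_mul_of_memL2 hx (Lp.memLp v))]
    rfl
  · intro c v
    simp only [RingHom.id_apply]
    rw [← MemLp.toLp_const_smul, MemLp.toLp_eq_toLp_iff]
    have hu : ∀ᵐ y ∂ν₂, (⇑(c • v) : Y → ℝ) y = c * v y := Lp.coeFn_smul c v
    filter_upwards [ae_memL2_slice hk] with x hx
    have h1 : ∫ y, k (x, y) * (c • v) y ∂ν₂ = ∫ y, c * (k (x, y) * v y) ∂ν₂ := by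
      refine integral_congr_ae ?_
      filter_upwards [hu] with y hy
      rw [hy]; ring
    rw [h1, integral_const_mul]
    rfl
  · intro v
    have h := norm_kernel_apply_le hk (Lp.memLp v)
    rwa [Lp.toLp_coeFn] at h

theorem kernelCLM_coeFn {k : X × Y → ℝ} (hk : MemLp k 2 (ν₁.prod ν₂)) (v : Lp ℝ 2 ν₂) :
    ⇑(kernelCLM hk v) =ᵐ[ν₁] fun x => ∫ y, k (x, y) * v y ∂ν₂ :=
  MemLp.coeFn_toLp (memL2_kernel_apply hk (Lp.memLp v))

theorem kernelCLM_congr_right {k : X × Y → ℝ} (hk : MemLp k 2 (ν₁.prod ν₂)) {v : Lp ℝ 2 ν₂}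
    {w : Y → ℝ} (hw : ⇑v =ᵐ[ν₂] w) :
    ⇑(kernelCLM hk v) =ᵐ[ν₁] fun x => ∫ y, k (x, y) * w y ∂ν₂ := by
  refine (kernelCLM_coeFn hk v).trans ?_
  refine Filter.Eventually.of_forall fun x => integral_congr_ae ?_
  filter_upwards [hw] with y hy
  rw [hy]


theorem ae_fst_prop {P : X → Prop} (h : ∀ᵐ x ∂ν₁, P x) :
    ∀ᵐ p : X × Y ∂(ν₁.prod ν₂), P p.1 :=
  Measure.quasiMeasurePreserving_fst.ae h

theorem ae_snd_prop {P : Y → Prop} (h : ∀ᵐ y ∂ν₂, P y) :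
    ∀ᵐ p : X × Y ∂(ν₁.prod ν₂), P p.2 :=
  Measure.quasiMeasurePreserving_snd.ae h

theorem pairing_comm {k : X × Y → ℝ} (hk : MemLp k 2 (ν₁.prod ν₂)) {g : X → ℝ} {v : Y → ℝ}
    (hg : MemLp g 2 ν₁) (hv : MemLp v 2 ν₂) :
    ∫ x, g x * ∫ y, k (x, y) * v y ∂ν₂ ∂ν₁ = ∫ y, v y * ∫ x, k (x, y) * g x ∂ν₁ ∂ν₂ := by
  have hW : Integrable (fun p : X × Y => g p.1 * (k p * v p.2)) (ν₁.prod ν₂) := by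
    have h := integrable_mul_of_memL2 (memL2_tensor hg hv) hk
    refine h.congr (Filter.Eventually.of_forall fun p => ?_); ring
  have h1 := integral_prod _ hW
  have h2 := integral_prod_symm _ hW
  calc ∫ x, g x * ∫ y, k (x, y) * v y ∂ν₂ ∂ν₁
      = ∫ x, ∫ y, g x * (k (x, y) * v y) ∂ν₂ ∂ν₁ := by
        refine integral_congr_ae (Filter.Eventually.of_forall fun x => ?_)
        dsimp only
        rw [integral_const_mul]
    _ = ∫ p : X × Y, g p.1 * (k p * v p.2) ∂(ν₁.prod ν₂) := h1.symm
    _ = ∫ y, ∫ x, g x * (k (x, y) * v y) ∂ν₁ ∂ν₂ := h2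
    _ = ∫ y, v y * ∫ x, k (x, y) * g x ∂ν₁ ∂ν₂ := by
        refine integral_congr_ae (Filter.Eventually.of_forall fun y => ?_)
        dsimp only
        rw [← integral_const_mul]
        refine integral_congr_ae (Filter.Eventually.of_forall fun x => ?_)
        ring

variable {Z : Type*} [MeasurableSpace Z] {ν₀ : Measure Z} [SigmaFinite ν₀]

theorem qmp_left {k₁ : X × Z → ℝ} :
    Measure.QuasiMeasurePreserving (fun q : (X × Y) × Z => (q.1.1, q.2))
      ((ν₁.prod ν₂).prod ν₀) (ν₁.prod ν₀) := by
  have e1 : MeasurePreserving (MeasurableEquiv.prodAssoc : (X × Y) × Z ≃ᵐ X × Y × Z)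
      ((ν₁.prod ν₂).prod ν₀) (ν₁.prod (ν₂.prod ν₀)) :=
    measurePreserving_prodAssoc ν₁ ν₂ ν₀
  have e2 : MeasurePreserving (Prod.map (id : X → X) (Prod.swap : Y × Z → Z × Y))
      (ν₁.prod (ν₂.prod ν₀)) (ν₁.prod (ν₀.prod ν₂)) :=
    (MeasurePreserving.id ν₁).prod Measure.measurePreserving_swap
  have e3 : MeasurePreserving (MeasurableEquiv.prodAssoc.symm : X × Z × Y ≃ᵐ (X × Z) × Y)
      (ν₁.prod (ν₀.prod ν₂)) ((ν₁.prod ν₀).prod ν₂) :=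
    (measurePreserving_prodAssoc ν₁ ν₀ ν₂).symm _
  have hcomp := Measure.quasiMeasurePreserving_fst.comp
    ((e3.comp (e2.comp e1)).quasiMeasurePreserving)
  exact hcomp

theorem qmp_right {k₂ : Y × Z → ℝ} :
    Measure.QuasiMeasurePreserving (fun q : (X × Y) × Z => (q.1.2, q.2))
      ((ν₁.prod ν₂).prod ν₀) (ν₂.prod ν₀) := by
  have e1 : MeasurePreserving (Prod.map (Prod.swap : X × Y → Y × X) (id : Z → Z))
      ((ν₁.prod ν₂).prod ν₀) ((ν₂.prod ν₁).prod ν₀) :=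
    Measure.measurePreserving_swap.prod (MeasurePreserving.id ν₀)
  have h := (qmp_left (ν₁ := ν₂) (ν₂ := ν₁) (ν₀ := ν₀) (k₁ := k₂)).comp
    e1.quasiMeasurePreserving
  exact h

theorem aesm_contraction_kernel {k₁ : X × Z → ℝ} {k₂ : Y × Z → ℝ}
    (hk₁ : MemLp k₁ 2 (ν₁.prod ν₀)) (hk₂ : MemLp k₂ 2 (ν₂.prod ν₀)) :
    AEStronglyMeasurable (fun q : (X × Y) × Z => k₁ (q.1.1, q.2) * k₂ (q.1.2, q.2))
      ((ν₁.prod ν₂).prod ν₀) :=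
  (hk₁.aestronglyMeasurable.comp_quasiMeasurePreserving (qmp_left (k₁ := k₁))).mul
    (hk₂.aestronglyMeasurable.comp_quasiMeasurePreserving (qmp_right (k₂ := k₂)))

theorem memL2_contraction {k₁ : X × Z → ℝ} {k₂ : Y × Z → ℝ}
    (hk₁ : MemLp k₁ 2 (ν₁.prod ν₀)) (hk₂ : MemLp k₂ 2 (ν₂.prod ν₀)) :
    MemLp (fun p : X × Y => ∫ d, k₁ (p.1, d) * k₂ (p.2, d) ∂ν₀) 2 (ν₁.prod ν₂) := by
  have hm : AEStronglyMeasurable (fun p : X × Y => ∫ d, k₁ (p.1, d) * k₂ (p.2, d) ∂ν₀)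
      (ν₁.prod ν₂) := (aesm_contraction_kernel hk₁ hk₂).integral_prod_right'
  have hmb : MemLp (fun p : X × Y =>
      Real.sqrt (∫ d, k₁ (p.1, d) ^ 2 ∂ν₀) * Real.sqrt (∫ d, k₂ (p.2, d) ^ 2 ∂ν₀)) 2
      (ν₁.prod ν₂) := memL2_tensor (memL2_sliceNorm hk₁) (memL2_sliceNorm hk₂)
  refine MemLp.of_le hmb hm ?_
  filter_upwards [ae_fst_prop (ae_memL2_slice hk₁), ae_snd_prop (ae_memL2_slice hk₂)]
    with p h1 h2
  rw [Real.norm_eq_abs, Real.norm_eq_abs]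
  exact le_trans (abs_integral_mul_le h1 h2) (le_abs_self _)

theorem integrable_quad {k₁ : X × Z → ℝ} {k₂ : Y × Z → ℝ}
    (hk₁ : MemLp k₁ 2 (ν₁.prod ν₀)) (hk₂ : MemLp k₂ 2 (ν₂.prod ν₀))
    {g : X → ℝ} {w : Y → ℝ} (hg : MemLp g 2 ν₁) (hw : MemLp w 2 ν₂) :
    Integrable (fun q : (X × Y) × Z =>
      (g q.1.1 * k₁ (q.1.1, q.2)) * (w q.1.2 * k₂ (q.1.2, q.2))) ((ν₁.prod ν₂).prod ν₀) := by
  have hm : AEStronglyMeasurable (fun q : (X × Y) × Z =>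
      (g q.1.1 * k₁ (q.1.1, q.2)) * (w q.1.2 * k₂ (q.1.2, q.2))) ((ν₁.prod ν₂).prod ν₀) := by
    have h1 : AEStronglyMeasurable (fun q : (X × Y) × Z => g q.1.1) ((ν₁.prod ν₂).prod ν₀) :=
      (hg.aestronglyMeasurable.comp_fst (ν := ν₂)).comp_fst
    have h2 : AEStronglyMeasurable (fun q : (X × Y) × Z => w q.1.2) ((ν₁.prod ν₂).prod ν₀) :=
      (hw.aestronglyMeasurable.comp_snd (μ := ν₁)).comp_fst
    have h3 := aesm_contraction_kernel hk₁ hk₂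
    have h4 := (h1.mul h2).mul h3
    refine h4.congr (Filter.Eventually.of_forall fun q => ?_)
    simp only [Pi.mul_apply]; ring
  rw [integrable_prod_iff hm]
  constructor
  · filter_upwards [ae_fst_prop (ae_memL2_slice hk₁), ae_snd_prop (ae_memL2_slice hk₂)]
      with p h1 h2
    have h := (integrable_mul_of_memL2 h1 h2).const_mul (g p.1 * w p.2)
    refine h.congr (Filter.Eventually.of_forall fun d => ?_); ring
  · have hdom : Integrable (fun p : X × Y =>
        (|g p.1| * Real.sqrt (∫ d, k₁ (p.1, d) ^ 2 ∂ν₀)) *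
        (|w p.2| * Real.sqrt (∫ d, k₂ (p.2, d) ^ 2 ∂ν₀))) (ν₁.prod ν₂) := by
      refine Integrable.mul_prod
        (f := fun x => |g x| * Real.sqrt (∫ d, k₁ (x, d) ^ 2 ∂ν₀))
        (g := fun y => |w y| * Real.sqrt (∫ d, k₂ (y, d) ^ 2 ∂ν₀)) ?_ ?_
      · refine integrable_mul_of_memL2 ?_ (memL2_sliceNorm hk₁)
        simpa only [Pi.abs_def] using hg.abs
      · refine integrable_mul_of_memL2 ?_ (memL2_sliceNorm hk₂)
        simpa only [Pi.abs_def] using hw.abs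
    have hmnorm : AEStronglyMeasurable (fun p : X × Y => ∫ d,
        ‖(g p.1 * k₁ (p.1, d)) * (w p.2 * k₂ (p.2, d))‖ ∂ν₀) (ν₁.prod ν₂) :=
      hm.norm.integral_prod_right'
    refine Integrable.mono' hdom hmnorm ?_
    filter_upwards [ae_fst_prop (ae_memL2_slice hk₁), ae_snd_prop (ae_memL2_slice hk₂)]
      with p h1 h2
    rw [Real.norm_eq_abs, abs_of_nonneg (integral_nonneg fun d => norm_nonneg _)]
    have hint : ∫ d, ‖(g p.1 * k₁ (p.1, d)) * (w p.2 * k₂ (p.2, d))‖ ∂ν₀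
        = |g p.1 * w p.2| * ∫ d, |k₁ (p.1, d) * k₂ (p.2, d)| ∂ν₀ := by
      rw [← integral_const_mul]
      refine integral_congr_ae (Filter.Eventually.of_forall fun d => ?_)
      dsimp only
      rw [Real.norm_eq_abs, ← abs_mul]
      congr 1
      ring
    rw [hint]
    have hcs : ∫ d, |k₁ (p.1, d) * k₂ (p.2, d)| ∂ν₀
        ≤ Real.sqrt (∫ d, k₁ (p.1, d) ^ 2 ∂ν₀) * Real.sqrt (∫ d, k₂ (p.2, d) ^ 2 ∂ν₀) := by
      have h1' : MemLp (fun y => |k₁ (p.1, y)|) 2 ν₀ := by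
        simpa only [Pi.abs_def] using h1.abs
      have h2' : MemLp (fun y => |k₂ (p.2, y)|) 2 ν₀ := by
        simpa only [Pi.abs_def] using h2.abs
      have h := abs_integral_mul_le h1' h2'
      rw [abs_of_nonneg (integral_nonneg fun d => mul_nonneg (abs_nonneg _) (abs_nonneg _))] at h
      calc ∫ d, |k₁ (p.1, d) * k₂ (p.2, d)| ∂ν₀
          = ∫ d, |k₁ (p.1, d)| * |k₂ (p.2, d)| ∂ν₀ := by
            refine integral_congr_ae (Filter.Eventually.of_forall fun d => ?_)
            dsimp only
            rw [abs_mul]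
        _ ≤ Real.sqrt (∫ d, |k₁ (p.1, d)| ^ 2 ∂ν₀) * Real.sqrt (∫ d, |k₂ (p.2, d)| ^ 2 ∂ν₀) := h
        _ = Real.sqrt (∫ d, k₁ (p.1, d) ^ 2 ∂ν₀) * Real.sqrt (∫ d, k₂ (p.2, d) ^ 2 ∂ν₀) := by
            simp [sq_abs]
    calc |g p.1 * w p.2| * ∫ d, |k₁ (p.1, d) * k₂ (p.2, d)| ∂ν₀
        ≤ |g p.1 * w p.2| * (Real.sqrt (∫ d, k₁ (p.1, d) ^ 2 ∂ν₀) *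
          Real.sqrt (∫ d, k₂ (p.2, d) ^ 2 ∂ν₀)) := by
          exact mul_le_mul_of_nonneg_left hcs (abs_nonneg _)
      _ = (|g p.1| * Real.sqrt (∫ d, k₁ (p.1, d) ^ 2 ∂ν₀)) *
          (|w p.2| * Real.sqrt (∫ d, k₂ (p.2, d) ^ 2 ∂ν₀)) := by
          rw [abs_mul]; ring

theorem pairing_contraction {k₁ : X × Z → ℝ} {k₂ : Y × Z → ℝ}
    (hk₁ : MemLp k₁ 2 (ν₁.prod ν₀)) (hk₂ : MemLp k₂ 2 (ν₂.prod ν₀))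
    {g : X → ℝ} {w : Y → ℝ} (hg : MemLp g 2 ν₁) (hw : MemLp w 2 ν₂) :
    ∫ d, (∫ x, k₁ (x, d) * g x ∂ν₁) * (∫ y, k₂ (y, d) * w y ∂ν₂) ∂ν₀
      = ∫ p : X × Y, (g p.1 * w p.2) * (∫ d, k₁ (p.1, d) * k₂ (p.2, d) ∂ν₀) ∂(ν₁.prod ν₂) := by
  have hW := integrable_quad hk₁ hk₂ hg hw
  have h1 := integral_prod _ hW
  have h2 := integral_prod_symm _ hW
  calc ∫ d, (∫ x, k₁ (x, d) * g x ∂ν₁) * (∫ y, k₂ (y, d) * w y ∂ν₂) ∂ν₀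
      = ∫ d, ∫ p : X × Y, (g p.1 * k₁ (p.1, d)) * (w p.2 * k₂ (p.2, d)) ∂(ν₁.prod ν₂) ∂ν₀ := by
        refine integral_congr_ae (Filter.Eventually.of_forall fun d => ?_)
        dsimp only
        rw [integral_prod_mul (f := fun x => g x * k₁ (x, d)) (g := fun y => w y * k₂ (y, d))]
        congr 1
        · refine integral_congr_ae (Filter.Eventually.of_forall fun x => ?_); ring
        · refine integral_congr_ae (Filter.Eventually.of_forall fun y => ?_); ring
    _ = ∫ q : (X × Y) × Z, (g q.1.1 * k₁ (q.1.1, q.2)) * (w q.1.2 * k₂ (q.1.2, q.2))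
          ∂((ν₁.prod ν₂).prod ν₀) := h2.symm
    _ = ∫ p : X × Y, ∫ d, (g p.1 * k₁ (p.1, d)) * (w p.2 * k₂ (p.2, d)) ∂ν₀ ∂(ν₁.prod ν₂) := h1
    _ = ∫ p : X × Y, (g p.1 * w p.2) * (∫ d, k₁ (p.1, d) * k₂ (p.2, d) ∂ν₀) ∂(ν₁.prod ν₂) := by
        refine integral_congr_ae (Filter.Eventually.of_forall fun p => ?_)
        dsimp only
        rw [← integral_const_mul]
        refine integral_congr_ae (Filter.Eventually.of_forall fun d => ?_)
        ring


section Tensor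

variable {C D : Type*} [MeasurableSpace C] [MeasurableSpace D]
  {γ : Measure C} {μ : Measure D} [SigmaFinite γ] [SigmaFinite μ]

/-- Elementary tensor in `L²(γ × μ)`. -/
def tensorLp (z : Lp ℝ 2 γ) (v : Lp ℝ 2 μ) : Lp ℝ 2 (γ.prod μ) :=
  (memL2_tensor (Lp.memLp z) (Lp.memLp v)).toLp _

theorem tensorLp_coeFn (z : Lp ℝ 2 γ) (v : Lp ℝ 2 μ) :
    ⇑(tensorLp z v) =ᵐ[γ.prod μ] fun p => z p.1 * v p.2 :=
  MemLp.coeFn_toLp _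

theorem inner_tensorLp (Θ : Lp ℝ 2 (γ.prod μ)) (z : Lp ℝ 2 γ) (v : Lp ℝ 2 μ) :
    (inner ℝ Θ (tensorLp z v) : ℝ) = ∫ p, Θ p * (z p.1 * v p.2) ∂(γ.prod μ) := by
  rw [L2.inner_def]
  refine integral_congr_ae ?_
  filter_upwards [tensorLp_coeFn z v] with p hp
  simp [hp, RCLike.inner_apply, mul_comm]

theorem tensorLp_add_right (z : Lp ℝ 2 γ) (u v : Lp ℝ 2 μ) :
    tensorLp z (u + v) = tensorLp z u + tensorLp z v := by
  unfold tensorLp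
  rw [← MemLp.toLp_add, MemLp.toLp_eq_toLp_iff]
  have h := ae_snd_prop (ν₁ := γ) (Lp.coeFn_add u v)
  filter_upwards [h] with p hp
  rw [hp]
  simp only [Pi.add_apply]
  ring

theorem inner_tensorLp_zero_of_decomp (Θ : Lp ℝ 2 (γ.prod μ)) (z : Lp ℝ 2 γ) (u v : Lp ℝ 2 μ)
    (h1 : (inner ℝ Θ (tensorLp z u) : ℝ) = 0) (h2 : (inner ℝ Θ (tensorLp z v) : ℝ) = 0) :
    (inner ℝ Θ (tensorLp z (u + v)) : ℝ) = 0 := by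
  rw [tensorLp_add_right, inner_add_right, h1, h2, add_zero]

/-- A function in `L²` of a product which is orthogonal to all elementary tensors vanishes. -/
theorem tensor_total (Θ : Lp ℝ 2 (γ.prod μ))
    (hz : ∀ (z : Lp ℝ 2 γ) (v : Lp ℝ 2 μ), (inner ℝ Θ (tensorLp z v) : ℝ) = 0) : Θ = 0 := by
  have hrect : ∀ (s : Set C) (t : Set D), MeasurableSet s → γ s ≠ ⊤ → MeasurableSet t →
      μ t ≠ ⊤ → ∫ p in s ×ˢ t, Θ p ∂(γ.prod μ) = 0 := by
    intro s t hs hγs ht hμt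
    classical
    have h := hz (indicatorConstLp 2 hs hγs (1 : ℝ)) (indicatorConstLp 2 ht hμt (1 : ℝ))
    rw [inner_tensorLp] at h
    rw [← h, ← integral_indicator (hs.prod ht)]
    refine integral_congr_ae ?_
    filter_upwards [ae_fst_prop (ν₂ := μ) (indicatorConstLp_coeFn (p := 2) (hs := hs)
        (hμs := hγs) (c := (1 : ℝ))),
      ae_snd_prop (ν₁ := γ) (indicatorConstLp_coeFn (p := 2) (hs := ht)
        (hμs := hμt) (c := (1 : ℝ)))] with p hp1 hp2
    rw [Set.indicator_apply]
    rw [hp1, hp2]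
    by_cases hps : p.1 ∈ s <;> by_cases hpt : p.2 ∈ t <;>
      simp [Set.indicator_apply, hps, hpt, Set.mem_prod]
  rw [Lp.eq_zero_iff_ae_eq_zero]
  have main : ∀ n : ℕ,
      ⇑Θ =ᵐ[(γ.prod μ).restrict ((spanningSets γ n) ×ˢ (spanningSets μ n))] 0 := by
    intro n
    set S := spanningSets γ n with hSdef
    set Tt := spanningSets μ n with hTdef
    have hS : MeasurableSet S := measurableSet_spanningSets γ n
    have hT : MeasurableSet Tt := measurableSet_spanningSets μ n
    set ρ : Measure (C × D) := (γ.prod μ).restrict (S ×ˢ Tt) with hρdef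
    haveI : IsFiniteMeasure ρ := by
      constructor
      rw [hρdef, Measure.restrict_apply_univ, Measure.prod_prod]
      exact ENNReal.mul_lt_top (measure_spanningSets_lt_top γ n)
        (measure_spanningSets_lt_top μ n)
    have hint : Integrable (⇑Θ) ρ := ((Lp.memLp Θ).restrict _).integrable one_le_two
    have hrectρ : ∀ (a : Set C) (b : Set D), MeasurableSet a → MeasurableSet b →
        ∫ p in a ×ˢ b, Θ p ∂ρ = 0 := by
      intro a b ha hb
      rw [hρdef, Measure.restrict_restrict (ha.prod hb), Set.prod_inter_prod]
      refine hrect _ _ (ha.inter hS) ?_ (hb.inter hT) ?_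
      · exact ne_top_of_le_ne_top (measure_spanningSets_lt_top γ n).ne
          (measure_mono Set.inter_subset_right)
      · exact ne_top_of_le_ne_top (measure_spanningSets_lt_top μ n).ne
          (measure_mono Set.inter_subset_right)
    have hsetint : ∀ u : Set (C × D), MeasurableSet u → ∫ p in u, Θ p ∂ρ = 0 := by
      set m₁ : Measure (C × D) := ρ.withDensity (fun p => ENNReal.ofReal (Θ p)) with hm₁
      set m₂ : Measure (C × D) := ρ.withDensity (fun p => ENNReal.ofReal (-Θ p)) with hm₂
      haveI : IsFiniteMeasure m₁ := isFiniteMeasure_withDensity_ofReal hint.hasFiniteIntegral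
      haveI : IsFiniteMeasure m₂ := isFiniteMeasure_withDensity_ofReal hint.neg.hasFiniteIntegral
      have hkey : ∀ u : Set (C × D), MeasurableSet u →
          ∫ p in u, Θ p ∂ρ = (m₁ u).toReal - (m₂ u).toReal := by
        intro u hu
        rw [hm₁, hm₂, withDensity_apply _ hu, withDensity_apply _ hu]
        exact integral_eq_lintegral_pos_part_sub_lintegral_neg_part hint.integrableOn
      have hagree : m₁ = m₂ := by
        refine MeasureTheory.ext_of_generate_finite _ generateFrom_prod.symm isPiSystem_prod ?_ ?_
        · rintro u ⟨a, ha, b, hb, rfl⟩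
          have h0 := hrectρ a b ha hb
          rw [hkey _ (MeasurableSet.prod ha hb)] at h0
          have h1 := sub_eq_zero.1 h0
          exact (ENNReal.toReal_eq_toReal_iff' (measure_ne_top m₁ _) (measure_ne_top m₂ _)).1 h1
        · have h0 := hrectρ Set.univ Set.univ MeasurableSet.univ MeasurableSet.univ
          rw [Set.univ_prod_univ] at h0
          rw [hkey _ MeasurableSet.univ] at h0
          have h1 := sub_eq_zero.1 h0
          exact (ENNReal.toReal_eq_toReal_iff' (measure_ne_top m₁ _) (measure_ne_top m₂ _)).1 h1
      intro u hu
      rw [hkey u hu, hagree, sub_self]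
    exact ae_eq_zero_of_forall_setIntegral_eq_of_sigmaFinite
      (fun s _ _ => hint.integrableOn) (fun s hs _ => hsetint s hs)
  rw [Filter.EventuallyEq, ae_iff]
  have hsub : {p : C × D | ¬ ⇑Θ p = (0 : (C × D) → ℝ) p}
      ⊆ ⋃ n, ({p : C × D | ¬ ⇑Θ p = (0 : (C × D) → ℝ) p}
        ∩ ((spanningSets γ n) ×ˢ (spanningSets μ n))) := by
    intro p hp
    have : p ∈ Set.univ := Set.mem_univ p
    rw [← Set.univ_prod_univ, ← iUnion_spanningSets γ, ← iUnion_spanningSets μ,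
      ← Set.iUnion_prod_of_monotone (monotone_spanningSets γ) (monotone_spanningSets μ)] at this
    obtain ⟨u, ⟨n, rfl⟩, hn⟩ := this
    exact Set.mem_iUnion.2 ⟨n, hp, hn⟩
  refine measure_mono_null hsub (measure_iUnion_null fun n => ?_)
  have hn := main n
  rw [Filter.EventuallyEq, ae_iff, Measure.restrict_apply'
    ((measurableSet_spanningSets γ n).prod (measurableSet_spanningSets μ n))] at hn
  exact hn

theorem inner_tensorLp_tensorLp (z z' : Lp ℝ 2 γ) (v v' : Lp ℝ 2 μ) :
    (inner ℝ (tensorLp z v) (tensorLp z' v') : ℝ) = (inner ℝ z z' : ℝ) * (inner ℝ v v' : ℝ) := by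
  have h : (inner ℝ (tensorLp z v) (tensorLp z' v') : ℝ)
      = ∫ p : C × D, (z p.1 * z' p.1) * (v p.2 * v' p.2) ∂(γ.prod μ) := by
    rw [L2.inner_def]
    refine integral_congr_ae ?_
    filter_upwards [tensorLp_coeFn z v, tensorLp_coeFn z' v'] with p h1 h2
    rw [h1, h2]
    simp only [RCLike.inner_apply, starRingEnd_apply, star_trivial]
    ring
  have e1 : (inner ℝ z z' : ℝ) = ∫ c, z c * z' c ∂γ := by
    rw [L2.inner_def]
    refine integral_congr_ae (Filter.Eventually.of_forall fun c => ?_)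
    simp [RCLike.inner_apply, mul_comm]
  have e2 : (inner ℝ v v' : ℝ) = ∫ d, v d * v' d ∂μ := by
    rw [L2.inner_def]
    refine integral_congr_ae (Filter.Eventually.of_forall fun d => ?_)
    simp [RCLike.inner_apply, mul_comm]
  rw [h, integral_prod_mul (f := fun c => z c * z' c) (g := fun d => v d * v' d), e1, e2]

/-- Key Hilbert-space step: if `Φ` is orthogonal to all tensors with second leg in `Vᗮ`,
and `Ψ` to all tensors with second leg in `V`, then `Φ ⊥ Ψ`. -/
theorem hilbert_key (V : Submodule ℝ (Lp ℝ 2 μ)) [CompleteSpace V]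
    (Φ Ψ : Lp ℝ 2 (γ.prod μ))
    (hΦ : ∀ (z : Lp ℝ 2 γ) (v : Lp ℝ 2 μ), v ∈ Vᗮ → (inner ℝ Φ (tensorLp z v) : ℝ) = 0)
    (hΨ : ∀ (z : Lp ℝ 2 γ) (w : Lp ℝ 2 μ), w ∈ V → (inner ℝ Ψ (tensorLp z w) : ℝ) = 0) :
    (inner ℝ Φ Ψ : ℝ) = 0 := by
  set sA : Set (Lp ℝ 2 (γ.prod μ)) := {e | ∃ z w, w ∈ V ∧ e = tensorLp z w} with hsA
  set sB : Set (Lp ℝ 2 (γ.prod μ)) := {e | ∃ z v, v ∈ Vᗮ ∧ e = tensorLp z v} with hsB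
  set SA : Submodule ℝ (Lp ℝ 2 (γ.prod μ)) := Submodule.span ℝ sA with hSA
  set SB : Submodule ℝ (Lp ℝ 2 (γ.prod μ)) := Submodule.span ℝ sB with hSB
  have hΦB : Φ ∈ SBᗮ := by
    rw [Submodule.mem_orthogonal]
    intro u hu
    refine Submodule.span_induction ?_ ?_ ?_ ?_ hu
    · rintro e ⟨z, v, hv, rfl⟩
      rw [real_inner_comm]
      exact hΦ z v hv
    · simp
    · intro a b _ _ ha hb
      rw [inner_add_left, ha, hb, add_zero]
    · intro r a _ ha
      rw [inner_smul_left, ha]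
      simp
  have hΨA : Ψ ∈ SAᗮ := by
    rw [Submodule.mem_orthogonal]
    intro u hu
    refine Submodule.span_induction ?_ ?_ ?_ ?_ hu
    · rintro e ⟨z, w, hw, rfl⟩
      rw [real_inner_comm]
      exact hΨ z w hw
    · simp
    · intro a b _ _ ha hb
      rw [inner_add_left, ha, hb, add_zero]
    · intro r a _ ha
      rw [inner_smul_left, ha]
      simp
  have hABgen : SA ≤ SBᗮ := by
    rw [Submodule.span_le]
    rintro e ⟨z, w, hw, rfl⟩
    rw [SetLike.mem_coe, Submodule.mem_orthogonal]
    intro u hu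
    refine Submodule.span_induction ?_ ?_ ?_ ?_ hu
    · rintro e' ⟨z', v', hv', rfl⟩
      rw [inner_tensorLp_tensorLp]
      rw [Submodule.mem_orthogonal] at hv'
      have h0 : (inner ℝ v' w : ℝ) = 0 := by
        rw [real_inner_comm]
        exact hv' w hw
      rw [h0, mul_zero]
    · simp
    · intro a b _ _ ha hb
      rw [inner_add_left, ha, hb, add_zero]
    · intro r a _ ha
      rw [inner_smul_left, ha]
      simp
  set K := SA.topologicalClosure with hKdef
  haveI : CompleteSpace K := SA.isClosed_topologicalClosure.completeSpace_coe
  obtain ⟨y, hy, u, hu, hdecomp⟩ := K.exists_add_mem_mem_orthogonal Φ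
  have hyB : y ∈ SBᗮ := by
    have hle : K ≤ SBᗮ :=
      Submodule.topologicalClosure_minimal SA hABgen (Submodule.isClosed_orthogonal SB)
    exact hle hy
  have huB : u ∈ SBᗮ := by
    have : u = Φ - y := by rw [hdecomp]; abel
    rw [this]
    exact Submodule.sub_mem _ hΦB hyB
  have huA : u ∈ SAᗮ := (Submodule.orthogonal_le (Submodule.le_topologicalClosure SA)) hu
  -- u is orthogonal to every elementary tensor, hence 0
  have hu0 : u = 0 := by
    refine tensor_total u fun z v => ?_
    obtain ⟨v₁, hv₁, v₂, hv₂, hv⟩ := V.exists_add_mem_mem_orthogonal v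
    have e1 : (inner ℝ u (tensorLp z v₁) : ℝ) = 0 := by
      rw [real_inner_comm]
      rw [Submodule.mem_orthogonal] at huA
      exact huA _ (Submodule.subset_span ⟨z, v₁, hv₁, rfl⟩)
    have e2 : (inner ℝ u (tensorLp z v₂) : ℝ) = 0 := by
      rw [real_inner_comm]
      rw [Submodule.mem_orthogonal] at huB
      exact huB _ (Submodule.subset_span ⟨z, v₂, hv₂, rfl⟩)
    rw [hv]
    exact inner_tensorLp_zero_of_decomp u z v₁ v₂ e1 e2
  have hΦK : Φ ∈ K := by
    rw [hdecomp, hu0, add_zero]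
    exact hy
  have hKA : K = SAᗮᗮ := (Submodule.orthogonal_orthogonal_eq_closure SA).symm
  rw [hKA] at hΦK
  rw [Submodule.mem_orthogonal] at hΦK
  exact real_inner_comm Ψ Φ ▸ hΦK Ψ hΨA

end Tensor

section Adjoint

variable {X Y : Type*} [MeasurableSpace X] [MeasurableSpace Y]
  {ν₁ : Measure X} {ν₂ : Measure Y} [SigmaFinite ν₁] [SigmaFinite ν₂]

theorem kernelCLM_adjoint {k : X × Y → ℝ} (hk : MemLp k 2 (ν₁.prod ν₂))
    (hkswap : MemLp (k ∘ Prod.swap) 2 (ν₂.prod ν₁)) (v : Lp ℝ 2 ν₂) (g : Lp ℝ 2 ν₁) :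
    (inner ℝ (kernelCLM hk v) g : ℝ) = (inner ℝ v (kernelCLM hkswap g) : ℝ) := by
  rw [L2.inner_def, L2.inner_def]
  have e1 : ∫ x, (inner ℝ ((kernelCLM hk v) x) (g x) : ℝ) ∂ν₁
      = ∫ x, g x * ∫ y, k (x, y) * v y ∂ν₂ ∂ν₁ := by
    refine integral_congr_ae ?_
    filter_upwards [kernelCLM_coeFn hk v] with x hx
    rw [hx]
    simp only [RCLike.inner_apply, starRingEnd_apply, star_trivial]
  have e2 : ∫ y, (inner ℝ (v y) ((kernelCLM hkswap g) y) : ℝ) ∂ν₂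
      = ∫ y, v y * ∫ x, k (x, y) * g x ∂ν₁ ∂ν₂ := by
    refine integral_congr_ae ?_
    filter_upwards [kernelCLM_coeFn hkswap g] with y hy
    rw [hy]
    simp only [RCLike.inner_apply, starRingEnd_apply, star_trivial]
    rw [mul_comm]; rfl
  rw [e1, e2, pairing_comm hk (Lp.memLp g) (Lp.memLp v)]

end Adjoint

section Abstract

variable {X Y C D : Type*} [MeasurableSpace X] [MeasurableSpace Y] [MeasurableSpace C]
  [MeasurableSpace D] {α : Measure X} {β : Measure Y} {γ : Measure C} {μ : Measure D}
  [SigmaFinite α] [SigmaFinite β] [SigmaFinite γ] [SigmaFinite μ]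

theorem abstract_contraction {F : (X × C) × D → ℝ} {H : (Y × C) × D → ℝ}
    (hF : MemLp F 2 ((α.prod γ).prod μ)) (hH : MemLp H 2 ((β.prod γ).prod μ))
    (h1 : ∀ᵐ p ∂((α.prod γ).prod (β.prod γ)), ∫ d, F (p.1, d) * H (p.2, d) ∂μ = 0) :
    ∀ᵐ p ∂(α.prod β), ∫ q, F ((p.1, q.1), q.2) * H ((p.2, q.1), q.2) ∂(γ.prod μ) = 0 := by
  have hFswap : MemLp (F ∘ Prod.swap) 2 (μ.prod (α.prod γ)) :=
    hF.comp_measurePreserving Measure.measurePreserving_swap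
  have hHswap : MemLp (H ∘ Prod.swap) 2 (μ.prod (β.prod γ)) :=
    hH.comp_measurePreserving Measure.measurePreserving_swap
  have mpX : MeasurePreserving (fun q : X × (C × D) => ((q.1, q.2.1), q.2.2))
      (α.prod (γ.prod μ)) ((α.prod γ).prod μ) :=
    (measurePreserving_prodAssoc α γ μ).symm MeasurableEquiv.prodAssoc
  have hF2 : MemLp (fun q : X × (C × D) => F ((q.1, q.2.1), q.2.2)) 2 (α.prod (γ.prod μ)) :=
    hF.comp_measurePreserving mpX
  have mpY : MeasurePreserving (fun q : Y × (C × D) => ((q.1, q.2.1), q.2.2))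
      (β.prod (γ.prod μ)) ((β.prod γ).prod μ) :=
    (measurePreserving_prodAssoc β γ μ).symm MeasurableEquiv.prodAssoc
  have hH2 : MemLp (fun q : Y × (C × D) => H ((q.1, q.2.1), q.2.2)) 2 (β.prod (γ.prod μ)) :=
    hH.comp_measurePreserving mpY
  have hF2swap : MemLp ((fun q : X × (C × D) => F ((q.1, q.2.1), q.2.2)) ∘ Prod.swap) 2
      ((γ.prod μ).prod α) := hF2.comp_measurePreserving Measure.measurePreserving_swap
  have hH2swap : MemLp ((fun q : Y × (C × D) => H ((q.1, q.2.1), q.2.2)) ∘ Prod.swap) 2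
      ((γ.prod μ).prod β) := hH2.comp_measurePreserving Measure.measurePreserving_swap
  have hF2ss : MemLp (((fun q : X × (C × D) => F ((q.1, q.2.1), q.2.2)) ∘ Prod.swap)
      ∘ Prod.swap) 2 (α.prod (γ.prod μ)) :=
    hF2swap.comp_measurePreserving Measure.measurePreserving_swap
  have hH2ss : MemLp (((fun q : Y × (C × D) => H ((q.1, q.2.1), q.2.2)) ∘ Prod.swap)
      ∘ Prod.swap) 2 (β.prod (γ.prod μ)) :=
    hH2swap.comp_measurePreserving Measure.measurePreserving_swap
  set Aop : Lp ℝ 2 (α.prod γ) →L[ℝ] Lp ℝ 2 μ := kernelCLM hFswap with hAop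
  set Bop : Lp ℝ 2 (β.prod γ) →L[ℝ] Lp ℝ 2 μ := kernelCLM hHswap with hBop
  set Aup : Lp ℝ 2 μ →L[ℝ] Lp ℝ 2 (α.prod γ) := kernelCLM hF with hAup
  set Bup : Lp ℝ 2 μ →L[ℝ] Lp ℝ 2 (β.prod γ) := kernelCLM hH with hBup
  set V : Submodule ℝ (Lp ℝ 2 μ) := (Submodule.span ℝ (Set.range Aop))ᗮ with hV
  have claim1 : ∀ v ∈ V, Aup v = 0 := by
    intro v hv
    have had : (inner ℝ (Aup v) (Aup v) : ℝ) = (inner ℝ v (Aop (Aup v)) : ℝ) :=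
      kernelCLM_adjoint hF hFswap v (Aup v)
    have hz : (inner ℝ v (Aop (Aup v)) : ℝ) = 0 := by
      rw [hV, Submodule.mem_orthogonal] at hv
      rw [real_inner_comm]
      exact hv _ (Submodule.subset_span (Set.mem_range_self _))
    rw [hz] at had
    exact inner_self_eq_zero.1 had
  have key : ∀ (g : Lp ℝ 2 (α.prod γ)) (kk : Lp ℝ 2 (β.prod γ)),
      (inner ℝ (Aop g) (Bop kk) : ℝ) = 0 := by
    intro g kk
    rw [L2.inner_def]
    have hc : ∫ d, (inner ℝ ((Aop g) d) ((Bop kk) d) : ℝ) ∂μ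
        = ∫ d, (∫ σ, F (σ, d) * g σ ∂(α.prod γ)) * (∫ τ, H (τ, d) * kk τ ∂(β.prod γ)) ∂μ := by
      refine integral_congr_ae ?_
      filter_upwards [kernelCLM_coeFn hFswap g, kernelCLM_coeFn hHswap kk] with d hd1 hd2
      rw [hd1, hd2]
      simp only [RCLike.inner_apply, starRingEnd_apply, star_trivial]
      rw [mul_comm]; rfl
    rw [hc, pairing_contraction hF hH (Lp.memLp g) (Lp.memLp kk)]
    refine integral_eq_zero_of_ae ?_
    filter_upwards [h1] with p hp
    simp only [Pi.zero_apply]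
    rw [hp, mul_zero]
  have claim2 : ∀ w ∈ Vᗮ, Bup w = 0 := by
    have hVorth : Vᗮ = (Submodule.span ℝ (Set.range Aop)).topologicalClosure := by
      rw [hV, Submodule.orthogonal_orthogonal_eq_closure]
    have hker : (Submodule.span ℝ (Set.range Aop)).topologicalClosure
        ≤ Bup.ker := by
      refine Submodule.topologicalClosure_minimal _ ?_ ?_
      · rw [Submodule.span_le]
        rintro _ ⟨g, rfl⟩
        rw [SetLike.mem_coe, LinearMap.mem_ker]
        have had := kernelCLM_adjoint hH hHswap (Aop g) (Bup (Aop g))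
        have h0 : (inner ℝ (Bup (Aop g)) (Bup (Aop g)) : ℝ) = 0 := by
          rw [had, real_inner_comm]
          have h := key g (Bup (Aop g))
          rwa [real_inner_comm] at h
        exact inner_self_eq_zero.1 h0
      · exact ContinuousLinearMap.isClosed_ker _
    intro w hw
    rw [hVorth] at hw
    exact LinearMap.mem_ker.1 (hker hw)
  have hΘmem := memL2_contraction hF2 hH2
  set Θ : Lp ℝ 2 (α.prod β) := hΘmem.toLp _ with hΘ
  have hΘzero : Θ = 0 := by
    refine tensor_total Θ fun g kk => ?_
    set Φ : Lp ℝ 2 (γ.prod μ) := kernelCLM hF2swap g with hΦdef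
    set Ψ : Lp ℝ 2 (γ.prod μ) := kernelCLM hH2swap kk with hΨdef
    have step1 : (inner ℝ Θ (tensorLp g kk) : ℝ) = (inner ℝ Φ Ψ : ℝ) := by
      rw [inner_tensorLp, L2.inner_def]
      have lhs : ∫ p, Θ p * (g p.1 * kk p.2) ∂(α.prod β)
          = ∫ p : X × Y, (g p.1 * kk p.2) *
            (∫ q, F ((p.1, q.1), q.2) * H ((p.2, q.1), q.2) ∂(γ.prod μ)) ∂(α.prod β) := by
        refine integral_congr_ae ?_
        filter_upwards [hΘmem.coeFn_toLp] with p hp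
        rw [hp, mul_comm]
      have rhs : ∫ q, (inner ℝ (Φ q) (Ψ q) : ℝ) ∂(γ.prod μ)
          = ∫ q, (∫ x, F ((x, q.1), q.2) * g x ∂α) * (∫ y, H ((y, q.1), q.2) * kk y ∂β)
            ∂(γ.prod μ) := by
        refine integral_congr_ae ?_
        filter_upwards [kernelCLM_coeFn hF2swap g, kernelCLM_coeFn hH2swap kk] with q hq1 hq2
        rw [hq1, hq2]
        simp only [RCLike.inner_apply, starRingEnd_apply, star_trivial]
        rw [mul_comm]; rfl
      rw [lhs, rhs, pairing_contraction hF2 hH2 (Lp.memLp g) (Lp.memLp kk)]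
    rw [step1]
    haveI : CompleteSpace (Vᗮ : Submodule ℝ (Lp ℝ 2 μ)) :=
      (Submodule.isClosed_orthogonal V).completeSpace_coe
    refine hilbert_key Vᗮ Φ Ψ ?_ ?_
    · intro z v hv
      have hvV : v ∈ V := by
        rw [hV] at hv ⊢
        rwa [Submodule.triorthogonal_eq_orthogonal] at hv
      have hA0 : Aup v = 0 := claim1 v hvV
      have hco : (fun σ : X × C => ∫ d, F (σ, d) * v d ∂μ) =ᵐ[α.prod γ] 0 := by
        refine (kernelCLM_coeFn hF v).symm.trans ?_
        rw [← hAup, hA0]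
        exact Lp.coeFn_zero ℝ 2 (α.prod γ)
      have hslice := Measure.ae_ae_of_ae_prod hco
      have hzero : kernelCLM hF2ss (tensorLp z v) = 0 := by
        rw [Lp.eq_zero_iff_ae_eq_zero]
        refine (kernelCLM_congr_right hF2ss (tensorLp_coeFn z v)).trans ?_
        filter_upwards [hslice, ae_memL2_slice hF2] with x hx hxmem
        have hInt : Integrable (fun q : C × D => F ((x, q.1), q.2) * (z q.1 * v q.2))
            (γ.prod μ) :=
          integrable_mul_of_memL2 hxmem (memL2_tensor (Lp.memLp z) (Lp.memLp v))
        show (∫ q : C × D, F ((x, q.1), q.2) * (z q.1 * v q.2) ∂(γ.prod μ)) = (0 : ℝ)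
        rw [integral_prod _ hInt]
        have hc2 : ∫ c, ∫ d, F ((x, c), d) * (z c * v d) ∂μ ∂γ
            = ∫ c, z c * ∫ d, F ((x, c), d) * v d ∂μ ∂γ := by
          refine integral_congr_ae (Filter.Eventually.of_forall fun c => ?_)
          dsimp only
          rw [← integral_const_mul]
          refine integral_congr_ae (Filter.Eventually.of_forall fun d => ?_)
          ring
        rw [hc2]
        refine integral_eq_zero_of_ae ?_
        filter_upwards [hx] with c hc
        simp only [Pi.zero_apply] at hc ⊢
        rw [hc, mul_zero]
      rw [hΦdef, kernelCLM_adjoint hF2swap hF2ss g (tensorLp z v), hzero, inner_zero_right]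
    · intro z w hw
      have hB0 : Bup w = 0 := claim2 w hw
      have hco : (fun τ : Y × C => ∫ d, H (τ, d) * w d ∂μ) =ᵐ[β.prod γ] 0 := by
        refine (kernelCLM_coeFn hH w).symm.trans ?_
        rw [← hBup, hB0]
        exact Lp.coeFn_zero ℝ 2 (β.prod γ)
      have hslice := Measure.ae_ae_of_ae_prod hco
      have hzero : kernelCLM hH2ss (tensorLp z w) = 0 := by
        rw [Lp.eq_zero_iff_ae_eq_zero]
        refine (kernelCLM_congr_right hH2ss (tensorLp_coeFn z w)).trans ?_
        filter_upwards [hslice, ae_memL2_slice hH2] with y hy hymem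
        have hInt : Integrable (fun q : C × D => H ((y, q.1), q.2) * (z q.1 * w q.2))
            (γ.prod μ) :=
          integrable_mul_of_memL2 hymem (memL2_tensor (Lp.memLp z) (Lp.memLp w))
        show (∫ q : C × D, H ((y, q.1), q.2) * (z q.1 * w q.2) ∂(γ.prod μ)) = (0 : ℝ)
        rw [integral_prod _ hInt]
        have hc2 : ∫ c, ∫ d, H ((y, c), d) * (z c * w d) ∂μ ∂γ
            = ∫ c, z c * ∫ d, H ((y, c), d) * w d ∂μ ∂γ := by
          refine integral_congr_ae (Filter.Eventually.of_forall fun c => ?_)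
          dsimp only
          rw [← integral_const_mul]
          refine integral_congr_ae (Filter.Eventually.of_forall fun d => ?_)
          ring
        rw [hc2]
        refine integral_eq_zero_of_ae ?_
        filter_upwards [hy] with c hc
        simp only [Pi.zero_apply] at hc ⊢
        rw [hc, mul_zero]
      rw [hΨdef, kernelCLM_adjoint hH2swap hH2ss kk (tensorLp z w), hzero, inner_zero_right]
  have hae : (fun p : X × Y => ∫ q, F ((p.1, q.1), q.2) * H ((p.2, q.1), q.2) ∂(γ.prod μ))
      =ᵐ[α.prod β] 0 := by
    refine (hΘmem.coeFn_toLp).symm.trans ?_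
    rw [← hΘ, hΘzero]
    exact Lp.coeFn_zero ℝ 2 (α.prod β)
  filter_upwards [hae] with p hp
  rw [Pi.zero_apply] at hp
  exact hp

end Abstract

section FinStuff

variable {T : Type*} [MeasurableSpace T] {μ : Measure T} [SigmaFinite μ]

/-- `Fin.append` as a measurable equivalence. -/
def appendEquiv (a b : ℕ) (T : Type*) [MeasurableSpace T] :
    ((Fin a → T) × (Fin b → T)) ≃ᵐ (Fin (a + b) → T) :=
  (MeasurableEquiv.sumPiEquivProdPi (fun _ : Fin a ⊕ Fin b => T)).symm.trans
    (MeasurableEquiv.piCongrLeft (fun _ => T) finSumFinEquiv)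

theorem appendEquiv_apply {a b : ℕ} (p : (Fin a → T) × (Fin b → T)) :
    appendEquiv a b T p = Fin.append p.1 p.2 := by
  funext i
  have hco : (appendEquiv a b T) p i
      = Equiv.piCongrLeft (fun _ => T) finSumFinEquiv
          ((Equiv.sumPiEquivProdPi (fun _ : Fin a ⊕ Fin b => T)).symm (p.1, p.2)) i := rfl
  rw [hco]
  refine Fin.addCases (fun j => ?_) (fun j => ?_) i
  · have h := Equiv.piCongrLeft_sumInl (fun _ : Fin (a + b) => T) finSumFinEquiv p.1 p.2 j
    rw [finSumFinEquiv_apply_left] at h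
    rw [Fin.append_left]
    exact h
  · have h := Equiv.piCongrLeft_sumInr (fun _ : Fin (a + b) => T) finSumFinEquiv p.1 p.2 j
    rw [finSumFinEquiv_apply_right] at h
    rw [Fin.append_right]
    exact h

theorem appendEquiv_measurePreserving (a b : ℕ) :
    MeasurePreserving (appendEquiv a b T)
      ((Measure.pi fun _ : Fin a => μ).prod (Measure.pi fun _ : Fin b => μ))
      (Measure.pi fun _ : Fin (a + b) => μ) :=
  (measurePreserving_piCongrLeft (fun _ : Fin (a + b) => μ) finSumFinEquiv).comp
    (measurePreserving_sumPiEquivProdPi_symm (fun _ : Fin a ⊕ Fin b => μ))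

/-- Reindexing along `Fin.cast` as a measurable equivalence. -/
def castEquivFin {a b : ℕ} (h : a = b) (T : Type*) [MeasurableSpace T] :
    (Fin a → T) ≃ᵐ (Fin b → T) :=
  MeasurableEquiv.piCongrLeft (fun _ => T) (finCongr h)

theorem castEquivFin_apply {a b : ℕ} (h : a = b) (x : Fin a → T) :
    castEquivFin h T x = x ∘ Fin.cast h.symm := by
  funext i
  have hco : castEquivFin h T x i = Equiv.piCongrLeft (fun _ => T) (finCongr h) x i := rfl
  rw [hco]
  conv_lhs => rw [← Equiv.apply_symm_apply (finCongr h) i]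
  rw [Equiv.piCongrLeft_apply_apply]
  simp [finCongr_symm, finCongr_apply]

theorem castEquivFin_measurePreserving {a b : ℕ} (h : a = b) :
    MeasurePreserving (castEquivFin h T)
      (Measure.pi fun _ : Fin a => μ) (Measure.pi fun _ : Fin b => μ) :=
  measurePreserving_piCongrLeft (fun _ : Fin b => μ) (finCongr h)

/-- `(s, c, d) ↦ s ++ c ++ [d]` as a measurable equivalence onto `T^q`. -/
def bigEquiv (n m q : ℕ) (h : n + m + 1 = q) (T : Type*) [MeasurableSpace T] :
    (((Fin n → T) × (Fin m → T)) × T) ≃ᵐ (Fin q → T) :=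
  (MeasurableEquiv.prodCongr (appendEquiv n m T) (MeasurableEquiv.funUnique (Fin 1) T).symm).trans
    ((appendEquiv (n + m) 1 T).trans (castEquivFin h T))

theorem bigEquiv_apply {n m q : ℕ} (h : n + m + 1 = q) (s : Fin n → T) (c : Fin m → T) (d : T) :
    bigEquiv n m q h T ((s, c), d)
      = Fin.append (Fin.append s c) (fun _ : Fin 1 => d) ∘ Fin.cast h.symm := by
  show castEquivFin h T (appendEquiv (n + m) 1 T
    ((appendEquiv n m T (s, c)), ((MeasurableEquiv.funUnique (Fin 1) T).symm d))) = _
  have h1 : appendEquiv n m T (s, c) = Fin.append s c := appendEquiv_apply (s, c)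
  have h2 : ((MeasurableEquiv.funUnique (Fin 1) T).symm d) = fun _ : Fin 1 => d := rfl
  rw [h1, h2, appendEquiv_apply, castEquivFin_apply]

theorem bigEquiv_measurePreserving {n m q : ℕ} (h : n + m + 1 = q) :
    MeasurePreserving (bigEquiv n m q h T)
      (((Measure.pi fun _ : Fin n => μ).prod (Measure.pi fun _ : Fin m => μ)).prod μ)
      (Measure.pi fun _ : Fin q => μ) := by
  have e1 : MeasurePreserving
      (Prod.map (appendEquiv n m T) ((MeasurableEquiv.funUnique (Fin 1) T).symm))
      (((Measure.pi fun _ : Fin n => μ).prod (Measure.pi fun _ : Fin m => μ)).prod μ)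
      ((Measure.pi fun _ : Fin (n + m) => μ).prod (Measure.pi fun _ : Fin 1 => μ)) :=
    (appendEquiv_measurePreserving n m).prod
      ((measurePreserving_funUnique μ (Fin 1)).symm (MeasurableEquiv.funUnique (Fin 1) T))
  exact ((castEquivFin_measurePreserving h).comp
    (appendEquiv_measurePreserving (n + m) 1)).comp e1

/-- `(c, d) ↦ c ++ [d]` as a measurable equivalence onto `T^r`. -/
def midEquiv (m r : ℕ) (h : m + 1 = r) (T : Type*) [MeasurableSpace T] :
    ((Fin m → T) × T) ≃ᵐ (Fin r → T) :=
  (MeasurableEquiv.prodCongr (MeasurableEquiv.refl (Fin m → T))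
    (MeasurableEquiv.funUnique (Fin 1) T).symm).trans
    ((appendEquiv m 1 T).trans (castEquivFin h T))

theorem midEquiv_apply {m r : ℕ} (h : m + 1 = r) (c : Fin m → T) (d : T) :
    midEquiv m r h T (c, d) = Fin.append c (fun _ : Fin 1 => d) ∘ Fin.cast h.symm := by
  show castEquivFin h T (appendEquiv m 1 T (c, fun _ : Fin 1 => d)) = _
  rw [appendEquiv_apply, castEquivFin_apply]

theorem midEquiv_measurePreserving {m r : ℕ} (h : m + 1 = r) :
    MeasurePreserving (midEquiv m r h T)
      ((Measure.pi fun _ : Fin m => μ).prod μ) (Measure.pi fun _ : Fin r => μ) := by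
  have e1 : MeasurePreserving
      (Prod.map (id : (Fin m → T) → (Fin m → T)) ((MeasurableEquiv.funUnique (Fin 1) T).symm))
      ((Measure.pi fun _ : Fin m => μ).prod μ)
      ((Measure.pi fun _ : Fin m => μ).prod (Measure.pi fun _ : Fin 1 => μ)) :=
    (MeasurePreserving.id _).prod
      ((measurePreserving_funUnique μ (Fin 1)).symm (MeasurableEquiv.funUnique (Fin 1) T))
  exact ((castEquivFin_measurePreserving h).comp
    (appendEquiv_measurePreserving m 1)).comp e1

/-- `(s, c) ↦ s ++ c` as a measurable equivalence onto `T^k`. -/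
def pairEquiv (n m k : ℕ) (h : n + m = k) (T : Type*) [MeasurableSpace T] :
    ((Fin n → T) × (Fin m → T)) ≃ᵐ (Fin k → T) :=
  (appendEquiv n m T).trans (castEquivFin h T)

theorem pairEquiv_apply {n m k : ℕ} (h : n + m = k) (s : Fin n → T) (c : Fin m → T) :
    pairEquiv n m k h T (s, c) = Fin.append s c ∘ Fin.cast h.symm := by
  show castEquivFin h T (appendEquiv n m T (s, c)) = _
  rw [appendEquiv_apply, castEquivFin_apply]

theorem pairEquiv_measurePreserving {n m k : ℕ} (h : n + m = k) :
    MeasurePreserving (pairEquiv n m k h T)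
      ((Measure.pi fun _ : Fin n => μ).prod (Measure.pi fun _ : Fin m => μ))
      (Measure.pi fun _ : Fin k => μ) :=
  (castEquivFin_measurePreserving h).comp (appendEquiv_measurePreserving n m)

theorem key1 {n m r q : ℕ} (h₁ : q = n + r) (h₂ : m + 1 = r) (h₃ : n + m + 1 = q)
    (s : Fin n → T) (c : Fin m → T) (w : Fin 1 → T) :
    (fun i : Fin q => Fin.append s (Fin.append c w ∘ Fin.cast h₂.symm) (Fin.cast h₁ i))
      = Fin.append (Fin.append s c) w ∘ Fin.cast h₃.symm := by
  rw [Fin.append_cast_right, Fin.append_assoc]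
  funext i
  rfl

theorem key2 {n m q : ℕ} (h₄ : q = (q - 1) + 1) (h₅ : n + m = q - 1) (h₃ : n + m + 1 = q)
    (s : Fin n → T) (c : Fin m → T) (w : Fin 1 → T) :
    (fun i : Fin q => Fin.append (Fin.append s c ∘ Fin.cast h₅.symm) w (Fin.cast h₄ i))
      = Fin.append (Fin.append s c) w ∘ Fin.cast h₃.symm := by
  rw [Fin.append_cast_left]
  funext i
  rfl

theorem midEquiv_apply' {m r : ℕ} (h : m + 1 = r) (q : (Fin m → T) × T) :
    midEquiv m r h T q = Fin.append q.1 (fun _ : Fin 1 => q.2) ∘ Fin.cast h.symm :=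
  midEquiv_apply h q.1 q.2

end FinStuff

end ContractionAux

open ContractionAux

/-- The `r`-th contraction of `f : T^{q₁} → ℝ` and `h : T^{q₂} → ℝ` with respect to `μ`:
`(f ⊗_r h)(s, t) = ∫_{T^r} f(s, u) h(t, u) dμ^{⊗r}(u)`. -/
noncomputable def contraction {T : Type*} [MeasurableSpace T] (μ : Measure T)
    {q₁ q₂ r : ℕ} (hr₁ : r ≤ q₁) (hr₂ : r ≤ q₂)
    (f : (Fin q₁ → T) → ℝ) (h : (Fin q₂ → T) → ℝ)
    (s : Fin (q₁ - r) → T) (t : Fin (q₂ - r) → T) : ℝ :=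
  ∫ u : Fin r → T,
      f (fun i => Fin.append s u (Fin.cast (Nat.sub_add_cancel hr₁).symm i)) *
      h (fun j => Fin.append t u (Fin.cast (Nat.sub_add_cancel hr₂).symm j))
    ∂(Measure.pi fun _ : Fin r => μ)

/-- **If the first contraction of two symmetric square-integrable kernels vanishes a.e.,
then all contractions vanish a.e.**: for symmetric `f ∈ L²(T^{q₁})`, `h ∈ L²(T^{q₂})`
with `f ⊗₁ h = 0` a.e., one has `f ⊗_r h = 0` a.e. for every `1 ≤ r ≤ q₁ ∧ q₂`. -/
theorem contraction_one_eq_zero_implies_all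
    {T : Type*} [MeasurableSpace T] (μ : Measure T) [SigmaFinite μ]
    (q₁ q₂ : ℕ) (hq₁ : 1 ≤ q₁) (hq₂ : 1 ≤ q₂)
    (f : (Fin q₁ → T) → ℝ) (h : (Fin q₂ → T) → ℝ)
    (hf : MemLp f 2 (Measure.pi fun _ : Fin q₁ => μ))
    (hh : MemLp h 2 (Measure.pi fun _ : Fin q₂ => μ))
    (hfsymm : ∀ (σ : Equiv.Perm (Fin q₁)) (x : Fin q₁ → T), f (x ∘ σ) = f x)
    (hhsymm : ∀ (σ : Equiv.Perm (Fin q₂)) (x : Fin q₂ → T), h (x ∘ σ) = h x)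
    (h1 : ∀ᵐ p ∂((Measure.pi fun _ : Fin (q₁ - 1) => μ).prod
        (Measure.pi fun _ : Fin (q₂ - 1) => μ)),
        contraction μ hq₁ hq₂ f h p.1 p.2 = 0) :
    ∀ (r : ℕ) (_ : 1 ≤ r) (hr₁ : r ≤ q₁) (hr₂ : r ≤ q₂),
      ∀ᵐ p ∂((Measure.pi fun _ : Fin (q₁ - r) => μ).prod
          (Measure.pi fun _ : Fin (q₂ - r) => μ)),
        contraction μ hr₁ hr₂ f h p.1 p.2 = 0 := by
  intro r hr0 hr₁ hr₂
  have h₂ : (r - 1) + 1 = r := by omega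
  have h₃₁ : (q₁ - r) + (r - 1) + 1 = q₁ := by omega
  have h₃₂ : (q₂ - r) + (r - 1) + 1 = q₂ := by omega
  have h₅₁ : (q₁ - r) + (r - 1) = q₁ - 1 := by omega
  have h₅₂ : (q₂ - r) + (r - 1) = q₂ - 1 := by omega
  have hF : MemLp (f ∘ (bigEquiv (q₁ - r) (r - 1) q₁ h₃₁ T)) 2
      (((Measure.pi fun _ : Fin (q₁ - r) => μ).prod
        (Measure.pi fun _ : Fin (r - 1) => μ)).prod μ) :=
    hf.comp_measurePreserving (bigEquiv_measurePreserving h₃₁)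
  have hH : MemLp (h ∘ (bigEquiv (q₂ - r) (r - 1) q₂ h₃₂ T)) 2
      (((Measure.pi fun _ : Fin (q₂ - r) => μ).prod
        (Measure.pi fun _ : Fin (r - 1) => μ)).prod μ) :=
    hh.comp_measurePreserving (bigEquiv_measurePreserving h₃₂)
  have h1' : ∀ᵐ p ∂((((Measure.pi fun _ : Fin (q₁ - r) => μ).prod
        (Measure.pi fun _ : Fin (r - 1) => μ))).prod
        ((Measure.pi fun _ : Fin (q₂ - r) => μ).prod
        (Measure.pi fun _ : Fin (r - 1) => μ))),
      ∫ d, (f ∘ (bigEquiv (q₁ - r) (r - 1) q₁ h₃₁ T)) (p.1, d) *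
        (h ∘ (bigEquiv (q₂ - r) (r - 1) q₂ h₃₂ T)) (p.2, d) ∂μ = 0 := by
    have mpP := ((pairEquiv_measurePreserving (μ := μ) h₅₁).prod
      (pairEquiv_measurePreserving (μ := μ) h₅₂))
    have h1'' := mpP.quasiMeasurePreserving.ae h1
    filter_upwards [h1''] with p hp
    obtain ⟨⟨s, c⟩, ⟨t, c'⟩⟩ := p
    have key : contraction μ hq₁ hq₂ f h
        (pairEquiv (q₁ - r) (r - 1) (q₁ - 1) h₅₁ T (s, c))
        (pairEquiv (q₂ - r) (r - 1) (q₂ - 1) h₅₂ T (t, c'))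
        = ∫ d, (f ∘ (bigEquiv (q₁ - r) (r - 1) q₁ h₃₁ T)) ((s, c), d) *
            (h ∘ (bigEquiv (q₂ - r) (r - 1) q₂ h₃₂ T)) ((t, c'), d) ∂μ := by
      unfold contraction
      erw [← MeasurePreserving.integral_comp'
        (f := (MeasurableEquiv.funUnique (Fin 1) T).symm)
        ((measurePreserving_funUnique μ (Fin 1)).symm _)]
      refine integral_congr_ae (Filter.Eventually.of_forall fun d => ?_)
      dsimp only
      have hw : ((MeasurableEquiv.funUnique (Fin 1) T).symm d) = fun _ : Fin 1 => d := rfl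
      have e1 : (fun i : Fin q₁ => Fin.append
            (pairEquiv (q₁ - r) (r - 1) (q₁ - 1) h₅₁ T (s, c))
            ((MeasurableEquiv.funUnique (Fin 1) T).symm d)
            (Fin.cast (Nat.sub_add_cancel hq₁).symm i))
          = (bigEquiv (q₁ - r) (r - 1) q₁ h₃₁ T) ((s, c), d) := by
        rw [pairEquiv_apply, bigEquiv_apply, hw]
        exact key2 (Nat.sub_add_cancel hq₁).symm h₅₁ h₃₁ s c _
      have e2 : (fun i : Fin q₂ => Fin.append
            (pairEquiv (q₂ - r) (r - 1) (q₂ - 1) h₅₂ T (t, c'))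
            ((MeasurableEquiv.funUnique (Fin 1) T).symm d)
            (Fin.cast (Nat.sub_add_cancel hq₂).symm i))
          = (bigEquiv (q₂ - r) (r - 1) q₂ h₃₂ T) ((t, c'), d) := by
        rw [pairEquiv_apply, bigEquiv_apply, hw]
        exact key2 (Nat.sub_add_cancel hq₂).symm h₅₂ h₃₂ t c' _
      rw [e1, e2]
      rfl
    rw [← key]
    exact hp
  have habs := abstract_contraction hF hH h1'
  filter_upwards [habs] with p hp
  obtain ⟨s, t⟩ := p
  have key : contraction μ hr₁ hr₂ f h s t
      = ∫ q : (Fin (r - 1) → T) × T,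
          (f ∘ (bigEquiv (q₁ - r) (r - 1) q₁ h₃₁ T)) ((s, q.1), q.2) *
          (h ∘ (bigEquiv (q₂ - r) (r - 1) q₂ h₃₂ T)) ((t, q.1), q.2)
          ∂((Measure.pi fun _ : Fin (r - 1) => μ).prod μ) := by
    unfold contraction
    rw [← MeasurePreserving.integral_comp' (f := midEquiv (r - 1) r h₂ T)
      (midEquiv_measurePreserving h₂)]
    refine integral_congr_ae (Filter.Eventually.of_forall fun q => ?_)
    dsimp only
    have e1 : (fun i : Fin q₁ => Fin.append s (midEquiv (r - 1) r h₂ T q)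
          (Fin.cast (Nat.sub_add_cancel hr₁).symm i))
        = (bigEquiv (q₁ - r) (r - 1) q₁ h₃₁ T) ((s, q.1), q.2) := by
      rw [midEquiv_apply', bigEquiv_apply]
      exact key1 (Nat.sub_add_cancel hr₁).symm h₂ h₃₁ s q.1 _
    have e2 : (fun i : Fin q₂ => Fin.append t (midEquiv (r - 1) r h₂ T q)
          (Fin.cast (Nat.sub_add_cancel hr₂).symm i))
        = (bigEquiv (q₂ - r) (r - 1) q₂ h₃₂ T) ((t, q.1), q.2) := by
      rw [midEquiv_apply', bigEquiv_apply]
      exact key1 (Nat.sub_add_cancel hr₂).symm h₂ h₃₂ t q.1 _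
    rw [e1, e2]
    rfl
  rw [key]
  exact hp
end ContractionAux
end
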